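/- arXiv:math/0606075 — 4 statements merged into one kernel-verified Lean document; each statement's English description precedes it below -/
import Mathlib

section
/- Let λ = (λ_0 ≤ λ_1 ≤ ⋯ ≤ λ_{2m}) be a nondecreasing sequence of nonnegative integers with λ_0 + ⋯ + λ_{2m} = 2n in which every odd value occurs an even number of times, and let a be the associated distinguished type-C u-symbol, defined by: a_i = λ_i/2 + i if λ_i is even; a_i = (λ_i − 1)/2 + i if λ_i is odd and the number of indices j > i with λ_j odd is even; and a_i = (λ_i + 1)/2 + i if λ_i is odd and the number of indices j > i with λ_j odd is odd. Then the number of ladders of a with odd bottom equals the number of distinct even values p occurring among λ_0, …, λ_{2m} whose height |{j : λ_j < p}| + 1 is even. -/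
open scoped Classical

/-- The map `i` from type-C u-symbols to type-C symbols: the `j`-th entry is
`a j - ⌈j/2⌉`. -/
def mapC (a : ℕ → ℕ) : ℕ → ℕ := fun j => a j - (j + 1) / 2

/-- A type-C u-symbol of rank `n` (with `2m+1` entries, indexed `0,…,2m`). -/
def IsUSymC (n m : ℕ) (a : ℕ → ℕ) : Prop :=
  1 ≤ a 1 ∧ (∀ i, i + 2 ≤ 2 * m → a i + 2 ≤ a (i + 2)) ∧
    (∑ j ∈ Finset.range (2 * m + 1), a j) = n + 2 * m ^ 2 + m

/-- The u-symbol `a` is distinguished: its entries are nondecreasing. -/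
def DistC (m : ℕ) (a : ℕ → ℕ) : Prop := ∀ i, i + 1 ≤ 2 * m → a i ≤ a (i + 1)

/-- `k` is an isolated point of the u-symbol `a`: the `k`-th entry of `i(a)` differs
from every other entry of `i(a)`. -/
def IsIsolC (m : ℕ) (a : ℕ → ℕ) (k : ℕ) : Prop :=
  k ≤ 2 * m ∧ ∀ l ≤ 2 * m, l ≠ k → mapC a l ≠ mapC a k

/-- `[k,l]` is a ladder of `a`: the entries `a k, …, a l` are `c, c+1, …, c+l-k`,
with `a (k-1) < c - 1` if `k > 0` and `a (l+1) > c + (l-k) + 1` if `l < 2m`. -/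
def IsLadderC (m : ℕ) (a : ℕ → ℕ) (k l : ℕ) : Prop :=
  k ≤ l ∧ l ≤ 2 * m ∧ (∀ j, k ≤ j → j ≤ l → a j = a k + (j - k)) ∧
    (0 < k → a (k - 1) + 1 < a k) ∧ (l < 2 * m → a l + 1 < a (l + 1))

/-- `[k,l]` is a staircase of `a`: `l-k+1` is even and the entries `a k, …, a l` are
`c, c, c+2, c+2, …, c+l-k-1, c+l-k-1`, with `a (k-2) < c - 2` if `k > 1` and
`a (l+2) > c + (l-k) + 1` if `l < 2m - 1`. -/
def IsStairC (m : ℕ) (a : ℕ → ℕ) (k l : ℕ) : Prop :=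
  k ≤ l ∧ l ≤ 2 * m ∧ (l - k) % 2 = 1 ∧
    (∀ j, k ≤ j → j ≤ l → a j = a k + 2 * ((j - k) / 2)) ∧
    (1 < k → a (k - 2) + 2 < a k) ∧ (l + 2 ≤ 2 * m → a l + 2 < a (l + 2))

/-- A part is a ladder or a staircase. -/
def IsPartC (m : ℕ) (a : ℕ → ℕ) (k l : ℕ) : Prop :=
  IsLadderC m a k l ∨ IsStairC m a k l

/-- The u-symbol associated to a partition `λ` (indexed `0,…,2m`):
`a i = λ i / 2 + i` if `λ i` is even; `a i = (λ i - 1)/2 + i` if `λ i` is odd and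
the number of indices `j > i` with `λ j` odd is even; and
`a i = (λ i + 1)/2 + i` if `λ i` is odd and that number is odd. -/
def aOfC (m : ℕ) (lam : ℕ → ℕ) : ℕ → ℕ := fun i =>
  if Even (lam i) then lam i / 2 + i
  else if Even (((Finset.range (2 * m + 1)).filter fun j => i < j ∧ ¬ Even (lam j)).card)
    then (lam i - 1) / 2 + i
    else (lam i + 1) / 2 + i

def Nc (m : ℕ) (lam : ℕ → ℕ) (i : ℕ) : ℕ :=
  ((Finset.range (2 * m + 1)).filter fun j => i < j ∧ ¬ Even (lam j)).card

def Kc (m : ℕ) (lam : ℕ → ℕ) (p : ℕ) : ℕ :=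
  ((Finset.range (2 * m + 1)).filter fun j => lam j < p).card

def Kc' (m : ℕ) (lam : ℕ → ℕ) (p : ℕ) : ℕ :=
  ((Finset.range (2 * m + 1)).filter fun j => lam j ≤ p).card

lemma initseg {S : Finset ℕ} {N : ℕ} (hsub : S ⊆ Finset.range N)
    (hdc : ∀ j k, j ≤ k → k ∈ S → j ∈ S) : S = Finset.range S.card := by
  ext j
  simp only [Finset.mem_range]
  constructor
  · intro hj
    have h1 : Finset.range (j + 1) ⊆ S := fun x hx =>
      hdc x j (Nat.lt_succ_iff.mp (Finset.mem_range.mp hx)) hj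
    have := Finset.card_le_card h1
    simpa using this
  · intro hj
    by_contra hjS
    have h2 : S ⊆ Finset.range j := by
      intro k hk
      simp only [Finset.mem_range]
      by_contra hk'
      exact hjS (hdc j k (Nat.le_of_not_lt hk') hk)
    have := Finset.card_le_card h2
    simp only [Finset.card_range] at this
    omega

lemma mono' {m : ℕ} {lam : ℕ → ℕ}
    (hmono : ∀ i, i + 1 ≤ 2 * m → lam i ≤ lam (i + 1)) :
    ∀ i j, i ≤ j → j ≤ 2 * m → lam i ≤ lam j := by
  intro i j hij hj
  induction j with
  | zero => interval_cases i; exact le_rfl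
  | succ j ih =>
    rcases Nat.eq_or_lt_of_le hij with h | h
    · rw [h]
    · exact le_trans (ih (by omega) (by omega)) (hmono j (by omega))

lemma evenAbove {m : ℕ} {lam : ℕ → ℕ}
    (hodd : ∀ p, Odd p →
      Even (((Finset.range (2 * m + 1)).filter fun j => lam j = p).card))
    (c : ℕ) :
    Even (((Finset.range (2 * m + 1)).filter fun j => ¬ Even (lam j) ∧ c < lam j).card) := by
  set R := Finset.range (2 * m + 1) with hR
  set S := R.filter fun j => ¬ Even (lam j) ∧ c < lam j with hS
  have hmap : ∀ x ∈ S, lam x ∈ R.image lam := by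
    intro x hx
    exact Finset.mem_image_of_mem lam (Finset.mem_of_mem_filter x hx)
  rw [Finset.card_eq_sum_card_fiberwise hmap]
  refine Finset.even_sum _ ?_
  intro p hp
  by_cases h : ¬ Even p ∧ c < p
  · have he : S.filter (fun x => lam x = p) = R.filter fun j => lam j = p := by
      ext x
      simp only [hS, Finset.mem_filter]
      constructor
      · rintro ⟨⟨hx, _⟩, hxp⟩; exact ⟨hx, hxp⟩
      · rintro ⟨hx, hxp⟩; exact ⟨⟨hx, hxp ▸ h.1, hxp ▸ h.2⟩, hxp⟩
    rw [he]
    exact hodd p (Nat.not_even_iff_odd.mp h.1)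
  · have he : S.filter (fun x => lam x = p) = ∅ := by
      ext x
      simp only [hS, Finset.mem_filter, Finset.notMem_empty, iff_false]
      rintro ⟨⟨_, h1, h2⟩, hxp⟩
      exact h ⟨hxp ▸ h1, hxp ▸ h2⟩
    simp [he]

lemma parityN {m : ℕ} {lam : ℕ → ℕ}
    (hmono : ∀ i, i + 1 ≤ 2 * m → lam i ≤ lam (i + 1))
    (hodd : ∀ p, Odd p →
      Even (((Finset.range (2 * m + 1)).filter fun j => lam j = p).card))
    {i : ℕ} (hi : i ≤ 2 * m) (hoi : ¬ Even (lam i)) :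
    (Even (Nc m lam i) ↔
      Even (((Finset.range (2 * m + 1)).filter fun j => i < j ∧ lam j = lam i).card)) := by
  have hmono' := mono' hmono
  set R := Finset.range (2 * m + 1) with hR
  set A := R.filter fun j => i < j ∧ lam j = lam i with hA
  set B := R.filter fun j => ¬ Even (lam j) ∧ lam i < lam j with hB
  have hunion : R.filter (fun j => i < j ∧ ¬ Even (lam j)) = A ∪ B := by
    ext j
    simp only [hA, hB, Finset.mem_union, Finset.mem_filter, hR, Finset.mem_range]
    constructor
    · rintro ⟨hj, hij, hoj⟩
      have hle : lam i ≤ lam j := hmono' i j (le_of_lt hij) (by omega)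
      rcases Nat.eq_or_lt_of_le hle with h | h
      · exact Or.inl ⟨hj, hij, h.symm⟩
      · exact Or.inr ⟨hj, hoj, h⟩
    · rintro (⟨hj, hij, he⟩ | ⟨hj, hoj, hlt⟩)
      · exact ⟨hj, hij, he ▸ hoi⟩
      · refine ⟨hj, ?_, hoj⟩
        by_contra hc
        exact absurd (hmono' j i (by omega) hi) (by omega)
  have hdisj : Disjoint A B := by
    rw [Finset.disjoint_left]
    intro j hj hj'
    simp only [hA, hB, Finset.mem_filter] at hj hj'
    omega
  have hB_even : Even B.card := evenAbove hodd (lam i)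
  unfold Nc
  rw [← hR, hunion, Finset.card_union_of_disjoint hdisj]
  rw [Nat.even_add]
  tauto

lemma aOfC_def (m : ℕ) (lam : ℕ → ℕ) (i : ℕ) :
    aOfC m lam i = if Even (lam i) then lam i / 2 + i
      else if Even (Nc m lam i) then (lam i - 1) / 2 + i else (lam i + 1) / 2 + i := rfl

lemma Nc_succ {m : ℕ} {lam : ℕ → ℕ} {i : ℕ} (hi : i + 1 ≤ 2 * m)
    (ho : ¬ Even (lam (i + 1))) : Nc m lam i = Nc m lam (i + 1) + 1 := by
  unfold Nc
  have h : (Finset.range (2 * m + 1)).filter (fun j => i < j ∧ ¬ Even (lam j)) =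
      insert (i + 1) ((Finset.range (2 * m + 1)).filter fun j => i + 1 < j ∧ ¬ Even (lam j)) := by
    ext j
    simp only [Finset.mem_insert, Finset.mem_filter, Finset.mem_range]
    constructor
    · rintro ⟨hj, hij, hoj⟩
      rcases Nat.lt_or_ge (i + 1) j with h | h
      · exact Or.inr ⟨hj, h, hoj⟩
      · exact Or.inl (by omega)
    · rintro (rfl | ⟨hj, hij, hoj⟩)
      · exact ⟨by omega, by omega, ho⟩
      · exact ⟨hj, by omega, hoj⟩
  rw [h, Finset.card_insert_of_notMem (by simp)]

lemma stepEven {m : ℕ} {lam : ℕ → ℕ} {i : ℕ} (hi : i + 1 ≤ 2 * m)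
    (heq : lam (i + 1) = lam i) (he : Even (lam i)) :
    aOfC m lam (i + 1) = aOfC m lam i + 1 := by
  rw [aOfC_def, aOfC_def, if_pos he, if_pos (heq ▸ he), heq]
  omega

lemma stepOddEq {m : ℕ} {lam : ℕ → ℕ} {i : ℕ} (hi : i + 1 ≤ 2 * m)
    (heq : lam (i + 1) = lam i) (ho : ¬ Even (lam i)) :
    (Even (Nc m lam (i + 1)) → aOfC m lam (i + 1) = aOfC m lam i) ∧
    (¬ Even (Nc m lam (i + 1)) → aOfC m lam (i + 1) = aOfC m lam i + 2) := by
  have hmod : lam i % 2 = 1 := Nat.not_even_iff.mp ho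
  have hsucc : Nc m lam i = Nc m lam (i + 1) + 1 := Nc_succ hi (heq ▸ ho)
  constructor
  · intro hN
    have hN' : ¬ Even (Nc m lam i) := by
      rw [hsucc, Nat.even_add_one]; exact fun h => h hN
    rw [aOfC_def, aOfC_def, if_neg (heq ▸ ho), if_neg ho, if_pos hN, if_neg hN', heq]
    omega
  · intro hN
    have hN' : Even (Nc m lam i) := by
      rw [hsucc, Nat.even_add_one]; exact hN
    rw [aOfC_def, aOfC_def, if_neg (heq ▸ ho), if_neg ho, if_neg hN, if_pos hN', heq]
    omega

lemma stepLt {m : ℕ} {lam : ℕ → ℕ}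
    (hmono : ∀ i, i + 1 ≤ 2 * m → lam i ≤ lam (i + 1))
    (hodd : ∀ p, Odd p →
      Even (((Finset.range (2 * m + 1)).filter fun j => lam j = p).card))
    {i : ℕ} (hi : i + 1 ≤ 2 * m) (hlt : lam i < lam (i + 1)) :
    aOfC m lam i + 2 ≤ aOfC m lam (i + 1) := by
  have hmono' := mono' hmono
  -- a i ≤ (lam i - 1)/2 + i  when lam i odd (N i is even)
  have hai : aOfC m lam i = if Even (lam i) then lam i / 2 + i else (lam i - 1) / 2 + i := by
    rw [aOfC_def]
    by_cases he : Even (lam i)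
    · rw [if_pos he, if_pos he]
    · have hNe : Even (Nc m lam i) := by
        rw [parityN hmono hodd (by omega) he]
        have : (Finset.range (2 * m + 1)).filter (fun j => i < j ∧ lam j = lam i) = ∅ := by
          ext j
          simp only [Finset.mem_filter, Finset.mem_range, Finset.notMem_empty, iff_false]
          rintro ⟨hj, hij, hlamj⟩
          have : lam (i + 1) ≤ lam j := hmono' (i + 1) j (by omega) (by omega)
          omega
        rw [this]; simp
      rw [if_neg he, if_neg he, if_pos hNe]
  have hai1 : aOfC m lam (i + 1) = if Even (lam (i + 1)) then lam (i + 1) / 2 + (i + 1)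
      else (lam (i + 1) + 1) / 2 + (i + 1) := by
    rw [aOfC_def]
    by_cases he : Even (lam (i + 1))
    · rw [if_pos he, if_pos he]
    · have hNo : ¬ Even (Nc m lam (i + 1)) := by
        rw [parityN hmono hodd (by omega) he]
        intro hC
        have hfib : (Finset.range (2 * m + 1)).filter (fun j => lam j = lam (i + 1)) =
            insert (i + 1) ((Finset.range (2 * m + 1)).filter fun j => i + 1 < j ∧ lam j = lam (i + 1)) := by
          ext j
          simp only [Finset.mem_insert, Finset.mem_filter, Finset.mem_range]
          constructor
          · rintro ⟨hj, hlamj⟩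
            rcases Nat.lt_or_ge (i + 1) j with h | h
            · exact Or.inr ⟨hj, h, hlamj⟩
            · left
              by_contra hne
              have hji : j ≤ i := by omega
              have : lam j ≤ lam i := hmono' j i hji (by omega)
              omega
          · rintro (rfl | ⟨hj, _, hlamj⟩)
            · exact ⟨by omega, rfl⟩
            · exact ⟨hj, hlamj⟩
        have heven := hodd (lam (i + 1)) (Nat.not_even_iff_odd.mp he)
        rw [hfib, Finset.card_insert_of_notMem (by simp)] at heven
        rw [Nat.even_add_one] at heven
        exact heven hC
      rw [if_neg he, if_neg he, if_neg hNo]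
  rw [hai, hai1]
  have h1 : lam i % 2 = 0 ∨ lam i % 2 = 1 := by omega
  by_cases he : Even (lam i) <;> by_cases he1 : Even (lam (i + 1)) <;>
    simp only [if_pos, if_neg, he, he1, if_true, if_false] <;>
    [skip; skip; skip; skip] <;>
    first
    | (rw [Nat.even_iff] at he he1; omega)
    | (rw [Nat.even_iff] at he; rw [Nat.not_even_iff] at he1; omega)
    | (rw [Nat.not_even_iff] at he; rw [Nat.even_iff] at he1; omega)
    | (rw [Nat.not_even_iff] at he; rw [Nat.not_even_iff] at he1; omega)

lemma Kc_initseg {m : ℕ} {lam : ℕ → ℕ}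
    (hmono : ∀ i, i + 1 ≤ 2 * m → lam i ≤ lam (i + 1)) (p : ℕ) :
    (Finset.range (2 * m + 1)).filter (fun j => lam j < p) = Finset.range (Kc m lam p) := by
  exact initseg (Finset.filter_subset _ _) (by
    intro j k hjk hk
    simp only [Finset.mem_filter, Finset.mem_range] at hk ⊢
    exact ⟨by omega, lt_of_le_of_lt (mono' hmono j k hjk (by omega)) hk.2⟩)

lemma Kc'_initseg {m : ℕ} {lam : ℕ → ℕ}
    (hmono : ∀ i, i + 1 ≤ 2 * m → lam i ≤ lam (i + 1)) (p : ℕ) :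
    (Finset.range (2 * m + 1)).filter (fun j => lam j ≤ p) = Finset.range (Kc' m lam p) := by
  exact initseg (Finset.filter_subset _ _) (by
    intro j k hjk hk
    simp only [Finset.mem_filter, Finset.mem_range] at hk ⊢
    exact ⟨by omega, le_trans (mono' hmono j k hjk (by omega)) hk.2⟩)

lemma backward {m : ℕ} {lam : ℕ → ℕ}
    (hmono : ∀ i, i + 1 ≤ 2 * m → lam i ≤ lam (i + 1))
    (hodd : ∀ p, Odd p →
      Even (((Finset.range (2 * m + 1)).filter fun j => lam j = p).card))
    {p j0 : ℕ} (hj0 : j0 ≤ 2 * m) (hj0p : lam j0 = p) (hpe : Even p) :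
    lam (Kc m lam p) = p ∧ 1 ≤ Kc' m lam p ∧
      IsLadderC m (aOfC m lam) (Kc m lam p) (Kc' m lam p - 1) := by
  have hmono' := mono' hmono
  set k := Kc m lam p with hk
  set kk := Kc' m lam p with hkk
  have hfl : (Finset.range (2 * m + 1)).filter (fun j => lam j < p) = Finset.range k :=
    Kc_initseg hmono p
  have hfl' : (Finset.range (2 * m + 1)).filter (fun j => lam j ≤ p) = Finset.range kk :=
    Kc'_initseg hmono p
  -- j0 ∈ filter ≤ p
  have hj0mem : j0 ∈ Finset.range kk := by
    rw [← hfl']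
    simp only [Finset.mem_filter, Finset.mem_range]
    exact ⟨by omega, le_of_eq hj0p⟩
  have hj0kk : j0 < kk := Finset.mem_range.mp hj0mem
  have hkk1 : 1 ≤ kk := by omega
  set l := kk - 1 with hl
  have hlkk : l + 1 = kk := by omega
  -- kk ≤ 2m + 1
  have hkk2m : kk ≤ 2 * m + 1 := by
    have := Finset.card_le_card (Finset.filter_subset (fun j => lam j ≤ p) (Finset.range (2 * m + 1)))
    rw [hkk, ← Finset.card_range (2 * m + 1)]; exact this
  have hl2m : l ≤ 2 * m := by omega
  -- k ≤ j0
  have hkj0 : k ≤ j0 := by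
    by_contra h
    have : j0 ∈ Finset.range k := Finset.mem_range.mpr (by omega)
    rw [← hfl] at this
    simp only [Finset.mem_filter] at this
    omega
  have hk2m : k ≤ 2 * m := le_trans hkj0 hj0
  -- lam k = p
  have hlamk : lam k = p := by
    have h1 : lam k ≤ p := hj0p ▸ hmono' k j0 hkj0 hj0
    have h2 : ¬ (lam k < p) := by
      intro h
      have : k ∈ Finset.range k := by
        rw [← hfl]; exact Finset.mem_filter.mpr ⟨Finset.mem_range.mpr (by omega), h⟩
      simp at this
    omega
  -- j0 ≤ l
  have hj0l : j0 ≤ l := by omega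
  -- lam l = p
  have hlaml : lam l = p := by
    have h1 : lam l ≤ p := by
      have : l ∈ Finset.range kk := Finset.mem_range.mpr (by omega)
      rw [← hfl'] at this
      exact (Finset.mem_filter.mp this).2
    have h2 : p ≤ lam l := hj0p ▸ hmono' j0 l hj0l hl2m
    omega
  have hkl : k ≤ l := le_trans hkj0 hj0l
  -- constancy on [k,l]
  have hconst : ∀ j, k ≤ j → j ≤ l → lam j = p := by
    intro j h1 h2
    have := hmono' k j h1 (by omega)
    have := hmono' j l h2 hl2m
    omega
  -- interior
  have hint : ∀ j, k ≤ j → j ≤ l → aOfC m lam j = aOfC m lam k + (j - k) := by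
    intro j h1 h2
    obtain ⟨d, rfl⟩ := Nat.exists_eq_add_of_le h1
    induction d with
    | zero => simp
    | succ d ih =>
      have hd : k + d ≤ l := by omega
      have hstep : aOfC m lam (k + d + 1) = aOfC m lam (k + d) + 1 := by
        apply stepEven (by omega)
        · rw [hconst (k + d + 1) (by omega) (by omega), hconst (k + d) (by omega) hd]
        · rw [hconst (k + d) (by omega) hd]; exact hpe
      rw [show k + (d + 1) = k + d + 1 by omega, hstep, ih (by omega) hd]
      omega
  refine ⟨hlamk, hkk1, hkl, hl2m, hint, ?_, ?_⟩
  · -- bottom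
    intro hkpos
    have hkm1 : lam (k - 1) < p := by
      have : k - 1 ∈ Finset.range k := Finset.mem_range.mpr (by omega)
      rw [← hfl] at this
      exact (Finset.mem_filter.mp this).2
    have := stepLt hmono hodd (i := k - 1) (by omega) (by
      rw [show k - 1 + 1 = k by omega, hlamk]; omega)
    rw [show k - 1 + 1 = k by omega] at this
    omega
  · -- top
    intro hltop
    have hlp1 : p < lam (l + 1) := by
      by_contra h
      have : l + 1 ∈ Finset.range kk := by
        rw [← hfl']
        exact Finset.mem_filter.mpr ⟨Finset.mem_range.mpr (by omega), by omega⟩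
      simp only [Finset.mem_range] at this
      omega
    have := stepLt hmono hodd (i := l) (by omega) (by rw [hlaml]; omega)
    omega

lemma forward {m : ℕ} {lam : ℕ → ℕ}
    (hmono : ∀ i, i + 1 ≤ 2 * m → lam i ≤ lam (i + 1))
    (hodd : ∀ p, Odd p →
      Even (((Finset.range (2 * m + 1)).filter fun j => lam j = p).card))
    {k l : ℕ} (hlad : IsLadderC m (aOfC m lam) k l) (hkodd : Odd k) :
    Even (lam k) ∧ Kc m lam (lam k) = k ∧ Kc' m lam (lam k) = l + 1 := by
  have hmono' := mono' hmono
  obtain ⟨hkl, hl2m, hint, hbot, htop⟩ := hlad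
  have hkpos : 0 < k := hkodd.pos
  have hk2m : k ≤ 2 * m := le_trans hkl hl2m
  -- forward step: inside the ladder, values are equal and even
  have hstepf : ∀ j, k ≤ j → j < l → lam (j + 1) = lam j ∧ Even (lam j) := by
    intro j h1 h2
    have hd1 : aOfC m lam j = aOfC m lam k + (j - k) := hint j h1 (by omega)
    have hd2 : aOfC m lam (j + 1) = aOfC m lam k + (j + 1 - k) := hint (j + 1) (by omega) (by omega)
    have hdiff : aOfC m lam (j + 1) = aOfC m lam j + 1 := by omega
    have hle : lam j ≤ lam (j + 1) := hmono j (by omega)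
    rcases Nat.eq_or_lt_of_le hle with heq | hlt
    · refine ⟨heq.symm, ?_⟩
      by_contra ho
      have hso := stepOddEq (m := m) (i := j) (by omega) heq.symm ho
      by_cases hN : Even (Nc m lam (j + 1))
      · have := hso.1 hN; omega
      · have := hso.2 hN; omega
    · have := stepLt hmono hodd (i := j) (by omega) hlt
      omega
  -- evenness of lam k
  have heven : Even (lam k) := by
    rcases Nat.eq_or_lt_of_le hkl with rfl | hlt
    · -- singleton: rule out odd
      by_contra ho
      have hbot' := hbot hkpos
      have hC := parityN hmono hodd hk2m ho
      by_cases hN : Even (Nc m lam k)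
      · have hCe := hC.mp hN
        by_cases hkm1 : lam (k - 1) = lam k
        · have hso := stepOddEq (m := m) (i := k - 1) (by omega)
            (by rw [show k - 1 + 1 = k from by omega]; exact hkm1.symm)
            (by rw [hkm1]; exact ho)
          rw [show k - 1 + 1 = k from by omega] at hso
          have := hso.1 hN
          omega
        · have hltk : lam (k - 1) < lam k :=
            lt_of_le_of_ne (hmono' (k - 1) k (by omega) hk2m) hkm1
          have hfib : (Finset.range (2 * m + 1)).filter (fun j => lam j = lam k) =
              insert k ((Finset.range (2 * m + 1)).filter fun j => k < j ∧ lam j = lam k) := by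
            ext j
            simp only [Finset.mem_insert, Finset.mem_filter, Finset.mem_range]
            constructor
            · rintro ⟨hj, hlamj⟩
              rcases Nat.lt_trichotomy j k with h | rfl | h
              · exfalso
                have : lam j ≤ lam (k - 1) := hmono' j (k - 1) (by omega) (by omega)
                omega
              · exact Or.inl rfl
              · exact Or.inr ⟨hj, h, hlamj⟩
            · rintro (rfl | ⟨hj, _, hlamj⟩)
              · exact ⟨by omega, rfl⟩
              · exact ⟨hj, hlamj⟩
          have hfull := hodd (lam k) (Nat.not_even_iff_odd.mp ho)
          rw [hfib, Finset.card_insert_of_notMem (by simp)] at hfull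
          rw [Nat.even_add_one] at hfull
          exact hfull hCe
      · have hCo : ¬ Even (((Finset.range (2 * m + 1)).filter
            fun j => k < j ∧ lam j = lam k).card) := fun h => hN (hC.mpr h)
        have hCne : ((Finset.range (2 * m + 1)).filter
            fun j => k < j ∧ lam j = lam k).Nonempty := by
          rw [Finset.nonempty_iff_ne_empty]
          intro h
          rw [h] at hCo
          simp at hCo
        obtain ⟨j, hj⟩ := hCne
        simp only [Finset.mem_filter, Finset.mem_range] at hj
        obtain ⟨hjr, hkj, hjlam⟩ := hj
        have hk2m' : k + 1 ≤ 2 * m := by omega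
        have hlamk1 : lam (k + 1) = lam k := by
          have h1 : lam k ≤ lam (k + 1) := hmono k hk2m'
          have h2 : lam (k + 1) ≤ lam j := hmono' (k + 1) j (by omega) (by omega)
          omega
        have hNs : Nc m lam k = Nc m lam (k + 1) + 1 :=
          Nc_succ hk2m' (by rw [hlamk1]; exact ho)
        have hNe : Even (Nc m lam (k + 1)) := by
          rcases Nat.even_or_odd (Nc m lam (k + 1)) with h | h
          · exact h
          · exfalso
            apply hN
            rw [hNs]
            exact Odd.add_one h
        have := (stepOddEq (m := m) (i := k) hk2m' hlamk1 ho).1 hNe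
        have := htop (by omega)
        omega
    · exact (hstepf k le_rfl hlt).2
  -- constancy
  have hconst : ∀ j, k ≤ j → j ≤ l → lam j = lam k := by
    intro j h1 h2
    obtain ⟨d, rfl⟩ := Nat.exists_eq_add_of_le h1
    induction d with
    | zero => simp
    | succ d ih =>
      have hd : k + d < l := by omega
      have := (hstepf (k + d) (by omega) hd).1
      rw [show k + (d + 1) = k + d + 1 from by omega, this]
      exact ih (by omega) (by omega)
  -- bottom strict
  have hbotlt : lam (k - 1) < lam k := by
    have hle : lam (k - 1) ≤ lam k := hmono' (k - 1) k (by omega) hk2m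
    rcases Nat.eq_or_lt_of_le hle with heq | h
    · exfalso
      have := stepEven (m := m) (i := k - 1) (by omega)
        (by rw [show k - 1 + 1 = k from by omega]; exact heq.symm) (heq ▸ heven)
      rw [show k - 1 + 1 = k from by omega] at this
      have := hbot hkpos
      omega
    · exact h
  -- top strict
  have htoplt : l < 2 * m → lam l < lam (l + 1) := by
    intro h2m
    have hle : lam l ≤ lam (l + 1) := hmono l h2m
    rcases Nat.eq_or_lt_of_le hle with heq | h
    · exfalso
      have hll : lam l = lam k := hconst l hkl le_rfl
      have := stepEven (m := m) (i := l) h2m heq.symm (hll ▸ heven)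
      have := htop h2m
      omega
    · exact h
  refine ⟨heven, ?_, ?_⟩
  · -- Kc = k
    have : (Finset.range (2 * m + 1)).filter (fun j => lam j < lam k) = Finset.range k := by
      ext j
      simp only [Finset.mem_filter, Finset.mem_range]
      constructor
      · rintro ⟨hj, hlamj⟩
        by_contra h
        have hkj : k ≤ j := by omega
        rcases Nat.lt_or_ge l j with h1 | h1
        · have h2m : l < 2 * m := by omega
          have : lam (l + 1) ≤ lam j := hmono' (l + 1) j h1 (by omega)
          have := htoplt h2m
          have hll : lam l = lam k := hconst l hkl le_rfl
          omega
        · rw [hconst j hkj h1] at hlamj; omega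
      · intro hj
        have : lam j ≤ lam (k - 1) := hmono' j (k - 1) (by omega) (by omega)
        exact ⟨by omega, by omega⟩
    unfold Kc
    rw [this, Finset.card_range]
  · -- Kc' = l + 1
    have : (Finset.range (2 * m + 1)).filter (fun j => lam j ≤ lam k) = Finset.range (l + 1) := by
      ext j
      simp only [Finset.mem_filter, Finset.mem_range]
      constructor
      · rintro ⟨hj, hlamj⟩
        by_contra h
        have hlj : l + 1 ≤ j := by omega
        have h2m : l < 2 * m := by omega
        have : lam (l + 1) ≤ lam j := hmono' (l + 1) j hlj (by omega)
        have := htoplt h2m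
        have hll : lam l = lam k := hconst l hkl le_rfl
        omega
      · intro hj
        refine ⟨by omega, ?_⟩
        rcases Nat.lt_or_ge j k with h | h
        · have : lam j ≤ lam (k - 1) := hmono' j (k - 1) (by omega) (by omega)
          omega
        · rw [hconst j h (by omega)]
    unfold Kc'
    rw [this, Finset.card_range]

/-- Let `λ = (λ 0 ≤ ⋯ ≤ λ (2m))` be a partition of `2n` in which every odd value
occurs an even number of times, and let `a` be the associated distinguished
type-C u-symbol.  Then the number of ladders of `a` with odd bottom equals the
number of distinct even values `p` occurring in `λ` whose height
`|{j : λ j < p}| + 1` is even. -/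
theorem stmt15 (n m : ℕ) (hn : 1 ≤ n) (hm : 1 ≤ m) (lam : ℕ → ℕ)
    (hmono : ∀ i, i + 1 ≤ 2 * m → lam i ≤ lam (i + 1))
    (hsum : (∑ j ∈ Finset.range (2 * m + 1), lam j) = 2 * n)
    (hodd : ∀ p, Odd p →
      Even (((Finset.range (2 * m + 1)).filter fun j => lam j = p).card)) :
    (((Finset.range (2 * m + 1)) ×ˢ (Finset.range (2 * m + 1))).filter fun q =>
        IsLadderC m (aOfC m lam) q.1 q.2 ∧ Odd q.1).card =
      (((Finset.range (2 * m + 1)).image lam).filter fun p =>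
        Even p ∧
          Even (((Finset.range (2 * m + 1)).filter fun j => lam j < p).card + 1)).card := by
  classical
  refine Finset.card_bij' (fun q _ => lam q.1)
    (fun p _ => (Kc m lam p, Kc' m lam p - 1)) ?_ ?_ ?_ ?_
  · rintro ⟨k, l⟩ hq
    simp only [Finset.mem_filter, Finset.mem_product, Finset.mem_range] at hq
    obtain ⟨⟨hk, hl⟩, hlad, hko⟩ := hq
    obtain ⟨he, hK, hK'⟩ := forward hmono hodd hlad hko
    simp only [Finset.mem_filter, Finset.mem_image]
    refine ⟨⟨k, Finset.mem_range.mpr hk, rfl⟩, he, ?_⟩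
    show Even (Kc m lam (lam k) + 1)
    rw [hK, Nat.even_add_one]
    exact Nat.not_even_iff_odd.mpr hko
  · intro p hp
    simp only [Finset.mem_filter, Finset.mem_image] at hp
    obtain ⟨⟨j0, hj0r, hj0p⟩, hpe, hpar⟩ := hp
    have hj0 : j0 ≤ 2 * m := by
      have := Finset.mem_range.mp hj0r; omega
    obtain ⟨hlamk, hkk1, hlad⟩ := backward hmono hodd hj0 hj0p hpe
    have hpar' : Even (Kc m lam p + 1) := hpar
    simp only [Finset.mem_filter, Finset.mem_product, Finset.mem_range]
    have h1 := hlad.1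
    have h2 := hlad.2.1
    refine ⟨⟨by omega, by omega⟩, by exact hlad, ?_⟩
    rw [Nat.even_add_one] at hpar'
    exact Nat.not_even_iff_odd.mp hpar'
  · rintro ⟨k, l⟩ hq
    simp only [Finset.mem_filter, Finset.mem_product, Finset.mem_range] at hq
    obtain ⟨⟨hk, hl⟩, hlad, hko⟩ := hq
    obtain ⟨he, hK, hK'⟩ := forward hmono hodd hlad hko
    simp only [Prod.mk.injEq]
    exact ⟨hK, by omega⟩
  · intro p hp
    simp only [Finset.mem_filter, Finset.mem_image] at hp
    obtain ⟨⟨j0, hj0r, hj0p⟩, hpe, hpar⟩ := hp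
    have hj0 : j0 ≤ 2 * m := by
      have := Finset.mem_range.mp hj0r; omega
    exact (backward hmono hodd hj0 hj0p hpe).1
end

section
/- Let a be a type-B u-symbol. Then a has an odd number of isolated points. Moreover, writing the isolated points as k_0, …, k_{2f}, numbered so that the corresponding entries of a' = i(a) satisfy a'_{k_0} < a'_{k_1} < ⋯ < a'_{k_{2f}}, if the symbol i(a) is special then k_t ≡ t (mod 2) for every t. -/
open scoped Classical

/-- The map `i` from type-B u-symbols to type-B symbols: the `j`-th entry is
`a j - ⌊j/2⌋`. -/
def mapB (a : ℕ → ℕ) : ℕ → ℕ := fun j => a j - j / 2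

/-- A type-B u-symbol of rank `n` (with `2m+1` entries, indexed `0,…,2m`). -/
def IsUSymB (n m : ℕ) (a : ℕ → ℕ) : Prop :=
  (∀ i, i + 2 ≤ 2 * m → a i + 2 ≤ a (i + 2)) ∧
    (∑ j ∈ Finset.range (2 * m + 1), a j) = n + 2 * m ^ 2

/-- The u-symbol `a` is distinguished: its entries are nondecreasing. -/
def DistB (m : ℕ) (a : ℕ → ℕ) : Prop := ∀ i, i + 1 ≤ 2 * m → a i ≤ a (i + 1)

/-- The symbol `i(a)` is special, i.e. its entries are nondecreasing. -/
def SpecialB (m : ℕ) (a : ℕ → ℕ) : Prop :=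
  ∀ i, i + 1 ≤ 2 * m → mapB a i ≤ mapB a (i + 1)

/-- `k` is an isolated point of the u-symbol `a`: the `k`-th entry of `i(a)` differs
from every other entry of `i(a)`. -/
def IsIsolB (m : ℕ) (a : ℕ → ℕ) (k : ℕ) : Prop :=
  k ≤ 2 * m ∧ ∀ l ≤ 2 * m, l ≠ k → mapB a l ≠ mapB a k

/-- `[k,l]` is a ladder of `a`. -/
def IsLadderB (m : ℕ) (a : ℕ → ℕ) (k l : ℕ) : Prop :=
  k ≤ l ∧ l ≤ 2 * m ∧ (∀ j, k ≤ j → j ≤ l → a j = a k + (j - k)) ∧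
    (0 < k → a (k - 1) + 1 < a k) ∧ (l < 2 * m → a l + 1 < a (l + 1))

/-- `[k,l]` is a staircase of `a`. -/
def IsStairB (m : ℕ) (a : ℕ → ℕ) (k l : ℕ) : Prop :=
  k ≤ l ∧ l ≤ 2 * m ∧ (l - k) % 2 = 1 ∧
    (∀ j, k ≤ j → j ≤ l → a j = a k + 2 * ((j - k) / 2)) ∧
    (1 < k → a (k - 2) + 2 < a k) ∧ (l + 2 ≤ 2 * m → a l + 2 < a (l + 2))

/-- A part is a ladder or a staircase. -/
def IsPartB (m : ℕ) (a : ℕ → ℕ) (k l : ℕ) : Prop :=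
  IsLadderB m a k l ∨ IsStairB m a k l

/-- `K 0, …, K (N-1)` enumerates the isolated points of `a`, ordered so that the
corresponding entries of `i(a)` are strictly increasing. -/
def EnumB (m : ℕ) (a : ℕ → ℕ) (N : ℕ) (K : ℕ → ℕ) : Prop :=
  (∀ t, t < N → IsIsolB m a (K t)) ∧
  (∀ j, IsIsolB m a j → ∃ t, t < N ∧ K t = j) ∧
  (∀ s t, s < t → t < N → mapB a (K s) < mapB a (K t))

/-! Within each parity class the entries of `i(a)` strictly increase, so a value of `i(a)` is
taken at most twice, and then at indices of opposite parity. Hence on any union `T` of fibres of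
`i(a)` the non-isolated indices split into equally many even and odd ones, and the number of
isolated points in `T` has the parity of `#T`. For `T = {0, …, 2m}` this is the oddness claim.
If `i(a)` is special it is monotone, so the indices below an isolated point `K t` form such a
union, and exactly the `t` isolated points `K 0, …, K (t-1)` lie below it. -/

open Finset

section

variable {m : ℕ} {a : ℕ → ℕ}

section

variable (hstep : ∀ i, i + 2 ≤ 2 * m → a i + 2 ≤ a (i + 2))
include hstep

theorem add_two_mul_le_of_step {i k : ℕ} (h : i + 2 * k ≤ 2 * m) : a i + 2 * k ≤ a (i + 2 * k) := by
  induction k with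
  | zero => simp
  | succ k ih =>
    have := hstep (i + 2 * k) (by omega)
    rw [show i + 2 * (k + 1) = i + 2 * k + 2 by ring]
    linarith [ih (by omega)]

theorem mapB_lt_of_mod_two_eq {i j : ℕ} (hj : j ≤ 2 * m) (hij : i < j) (hmod : i % 2 = j % 2) :
    mapB a i < mapB a j := by
  obtain ⟨k, rfl⟩ : ∃ k, j = i + 2 * (k + 1) := ⟨(j - i) / 2 - 1, by omega⟩
  have hgap := add_two_mul_le_of_step hstep hj
  -- `a i ≥ i / 2` makes the truncated subtraction in `mapB a i` honest
  have hbase := add_two_mul_le_of_step hstep (i := i % 2) (k := i / 2) (by omega)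
  rw [Nat.mod_add_div] at hbase
  simp only [mapB]
  omega

theorem mod_two_ne_of_mapB_eq {i j : ℕ} (hi : i ≤ 2 * m) (hj : j ≤ 2 * m) (hij : i ≠ j)
    (heq : mapB a i = mapB a j) : i % 2 ≠ j % 2 := by
  intro hmod
  rcases Nat.lt_or_gt_of_ne hij with h | h
  · exact (mapB_lt_of_mod_two_eq hstep hj h hmod).ne heq
  · exact (mapB_lt_of_mod_two_eq hstep hi h hmod.symm).ne' heq

theorem card_filter_isIsolB_mod_two {T : Finset ℕ} (hT : ∀ j ∈ T, j ≤ 2 * m)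
    (hfibre : ∀ j ∈ T, ∀ l ≤ 2 * m, mapB a l = mapB a j → l ∈ T) :
    #(T.filter (IsIsolB m a)) % 2 = #T % 2 := by
  set U := T.filter fun j => ¬ IsIsolB m a j
  have hpartner : ∀ j ∈ U, ∃ l ∈ U, l % 2 ≠ j % 2 ∧ mapB a l = mapB a j := by
    intro j hj
    obtain ⟨hjT, hjiso⟩ := mem_filter.1 hj
    have hjm := hT j hjT
    obtain ⟨l, hlm, hlj, hfl⟩ : ∃ l ≤ 2 * m, l ≠ j ∧ mapB a l = mapB a j := by
      simpa [IsIsolB, hjm] using hjiso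
    refine ⟨l, mem_filter.2 ⟨hfibre j hjT l hlm hfl, fun hliso => ?_⟩,
      mod_two_ne_of_mapB_eq hstep hlm hjm hlj hfl, hfl⟩
    exact hliso.2 j hjm hlj.symm hfl.symm
  have hinj : ∀ (p : ℕ → Prop) [DecidablePred p], (∀ i j, p i → p j → i % 2 = j % 2) →
      Set.InjOn (mapB a) ↑(U.filter p) := by
    intro p _ hp i hi j hj heq
    simp only [coe_filter, mem_filter, U] at hi hj
    by_contra hij
    exact mod_two_ne_of_mapB_eq hstep (hT i hi.1.1) (hT j hj.1.1) hij heq (hp i j hi.2 hj.2)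
  have himage : (U.filter fun j => j % 2 = 0).image (mapB a) =
      (U.filter fun j => ¬ j % 2 = 0).image (mapB a) := by
    ext v
    simp only [mem_image, mem_filter]
    constructor <;>
    · rintro ⟨j, ⟨hjU, hjmod⟩, rfl⟩
      obtain ⟨l, hlU, hlmod, hfl⟩ := hpartner j hjU
      exact ⟨l, ⟨hlU, by omega⟩, hfl⟩
  have hUcard : #(U.filter fun j => j % 2 = 0) = #(U.filter fun j => ¬ j % 2 = 0) := by
    rw [← card_image_of_injOn (hinj (· % 2 = 0) fun i j hi hj => hi.trans hj.symm), himage,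
      card_image_of_injOn (hinj (¬ · % 2 = 0) fun i j hi hj => by omega)]
  have hU := card_filter_add_card_filter_not (s := U) (fun j => j % 2 = 0)
  have hTsplit : #(T.filter (IsIsolB m a)) + #U = #T := card_filter_add_card_filter_not _
  omega

end

theorem SpecialB.monotoneOn (h : SpecialB m a) : MonotoneOn (mapB a) (Set.Iic (2 * m)) :=
  monotoneOn_of_le_succ Set.ordConnected_Iic fun i _ _ hi => by
    rw [Order.succ_eq_add_one] at hi ⊢
    exact h i hi

theorem IsIsolB.lt_of_mapB_eq (hmono : MonotoneOn (mapB a) (Set.Iic (2 * m))) {k j l : ℕ}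
    (hk : IsIsolB m a k) (hjk : j < k) (hl : l ≤ 2 * m) (heq : mapB a l = mapB a j) : l < k := by
  by_contra! hkl
  have hjm : j ≤ 2 * m := by have := hk.1; omega
  have hjk' : mapB a j ≤ mapB a k := hmono hjm hk.1 hjk.le
  have hkl' : mapB a k ≤ mapB a l := hmono hk.1 hl hkl
  exact hk.2 j hjm hjk.ne (le_antisymm hjk' (heq ▸ hkl'))

theorem EnumB.strictMonoOn (hmono : MonotoneOn (mapB a) (Set.Iic (2 * m))) {N : ℕ}
    {K : ℕ → ℕ} (hK : EnumB m a N K) : StrictMonoOn K (Set.Iio N) := by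
  intro s hs t ht hst
  by_contra! hle
  exact (hK.2.2 s t hst ht).not_ge (hmono (hK.1 t ht).1 (hK.1 s hs).1 hle)

theorem EnumB.card_filter_isIsolB_lt (hmono : MonotoneOn (mapB a) (Set.Iic (2 * m))) {N : ℕ}
    {K : ℕ → ℕ} (hK : EnumB m a N K) {t : ℕ} (ht : t < N) :
    #((range (K t)).filter (IsIsolB m a)) = t := by
  have hKmono := hK.strictMonoOn hmono
  have hbelow : (range (K t)).filter (IsIsolB m a) = (range t).image K := by
    ext j
    simp only [mem_filter, mem_range, mem_image]
    constructor
    · rintro ⟨hj, hiso⟩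
      obtain ⟨s, hs, rfl⟩ := hK.2.1 j hiso
      exact ⟨s, (hKmono.lt_iff_lt hs ht).1 hj, rfl⟩
    · rintro ⟨s, hs, rfl⟩
      exact ⟨hKmono (hs.trans ht) ht hs, hK.1 s (hs.trans ht)⟩
  rw [hbelow, card_image_of_injOn (hKmono.injOn.mono fun s hs => (mem_range.1 hs).trans ht),
    card_range]

end

theorem stmt16_general (n m : ℕ) (a : ℕ → ℕ)
    (ha : IsUSymB n m a) :
    Odd ((Finset.range (2 * m + 1)).filter (IsIsolB m a)).card ∧
    (SpecialB m a →
      ∀ N K, EnumB m a N K → ∀ t, t < N → K t % 2 = t % 2) := by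
  obtain ⟨hstep, -⟩ := ha
  constructor
  · have h := card_filter_isIsolB_mod_two hstep (T := range (2 * m + 1))
      (fun j hj => Nat.lt_succ_iff.1 (mem_range.1 hj)) fun _ _ l hl _ => mem_range.2 (by omega)
    rw [card_range] at h
    exact Nat.odd_iff.2 (by omega)
  · intro hsp N K hK t ht
    have hmono := hsp.monotoneOn
    have hk := hK.1 t ht
    have h := card_filter_isIsolB_mod_two hstep (T := range (K t))
      (fun j hj => by have := mem_range.1 hj; have := hk.1; omega)
      fun j hj l hl heq => mem_range.2 (hk.lt_of_mapB_eq hmono (mem_range.1 hj) hl heq)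
    rwa [hK.card_filter_isIsolB_lt hmono ht, card_range, eq_comm] at h

/-- A type-B u-symbol has an odd number of isolated points; and if `i(a)` is
special then, numbering the isolated points `K 0, …, K (N-1)` so that the
corresponding entries of `i(a)` increase, `K t ≡ t (mod 2)` for every `t`. -/
theorem stmt16 (n m : ℕ) (hn : 1 ≤ n) (hm : 1 ≤ m) (a : ℕ → ℕ)
    (ha : IsUSymB n m a) :
    Odd ((Finset.range (2 * m + 1)).filter (IsIsolB m a)).card ∧
    (SpecialB m a →
      ∀ N K, EnumB m a N K → ∀ t, t < N → K t % 2 = t % 2) :=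
  stmt16_general n m a ha
end

section
/- Let a be a type-D u-symbol. Then a has an even number of isolated points. Moreover, writing the isolated points as k_0, …, k_{2f+1}, numbered so that the corresponding entries of a' = i(a) satisfy a'_{k_0} < a'_{k_1} < ⋯ < a'_{k_{2f+1}}, if the symbol i(a) is special then k_t ≡ t (mod 2) for every t. -/
open scoped Classical

/-- The map `i` from type-D u-symbols to type-D symbols: the `j`-th entry is
`a j - ⌊j/2⌋`. -/
def mapD (a : ℕ → ℕ) : ℕ → ℕ := fun j => a j - j / 2

/-- Condition (⋆): if `i` is the smallest index with `a (2i) ≠ a (2i+1)`, then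
`a (2i) < a (2i+1)`. -/
def StarD (m : ℕ) (a : ℕ → ℕ) : Prop :=
  ∀ i, i ≤ m → a (2 * i) ≠ a (2 * i + 1) →
    (∀ i', i' < i → a (2 * i') = a (2 * i' + 1)) → a (2 * i) < a (2 * i + 1)

/-- A type-D u-symbol of rank `n` (with `2m+2` entries, indexed `0,…,2m+1`). -/
def IsUSymD (n m : ℕ) (a : ℕ → ℕ) : Prop :=
  (∀ i, i + 2 ≤ 2 * m + 1 → a i + 2 ≤ a (i + 2)) ∧
    (∑ j ∈ Finset.range (2 * m + 2), a j) = n + 2 * m ^ 2 + 2 * m ∧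
    StarD m a

/-- The u-symbol `a` is distinguished: its entries are nondecreasing. -/
def DistD (m : ℕ) (a : ℕ → ℕ) : Prop := ∀ i, i + 1 ≤ 2 * m + 1 → a i ≤ a (i + 1)

/-- The symbol `i(a)` is special, i.e. its entries are nondecreasing. -/
def SpecialD (m : ℕ) (a : ℕ → ℕ) : Prop :=
  ∀ i, i + 1 ≤ 2 * m + 1 → mapD a i ≤ mapD a (i + 1)

/-- `k` is an isolated point of the u-symbol `a`: the `k`-th entry of `i(a)` differs
from every other entry of `i(a)`. -/
def IsIsolD (m : ℕ) (a : ℕ → ℕ) (k : ℕ) : Prop :=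
  k ≤ 2 * m + 1 ∧ ∀ l ≤ 2 * m + 1, l ≠ k → mapD a l ≠ mapD a k

/-- `[k,l]` is a ladder of `a`. -/
def IsLadderD (m : ℕ) (a : ℕ → ℕ) (k l : ℕ) : Prop :=
  k ≤ l ∧ l ≤ 2 * m + 1 ∧ (∀ j, k ≤ j → j ≤ l → a j = a k + (j - k)) ∧
    (0 < k → a (k - 1) + 1 < a k) ∧ (l < 2 * m + 1 → a l + 1 < a (l + 1))

/-- `[k,l]` is a staircase of `a`. -/
def IsStairD (m : ℕ) (a : ℕ → ℕ) (k l : ℕ) : Prop :=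
  k ≤ l ∧ l ≤ 2 * m + 1 ∧ (l - k) % 2 = 1 ∧
    (∀ j, k ≤ j → j ≤ l → a j = a k + 2 * ((j - k) / 2)) ∧
    (1 < k → a (k - 2) + 2 < a k) ∧ (l + 2 ≤ 2 * m + 1 → a l + 2 < a (l + 2))

/-- A part is a ladder or a staircase. -/
def IsPartD (m : ℕ) (a : ℕ → ℕ) (k l : ℕ) : Prop :=
  IsLadderD m a k l ∨ IsStairD m a k l

/-- `K 0, …, K (N-1)` enumerates the isolated points of `a`, ordered so that the
corresponding entries of `i(a)` are strictly increasing. -/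
def EnumD (m : ℕ) (a : ℕ → ℕ) (N : ℕ) (K : ℕ → ℕ) : Prop :=
  (∀ t, t < N → IsIsolD m a (K t)) ∧
  (∀ j, IsIsolD m a j → ∃ t, t < N ∧ K t = j) ∧
  (∀ s t, s < t → t < N → mapD a (K s) < mapD a (K t))

noncomputable def paD (m : ℕ) (a : ℕ → ℕ) (k : ℕ) : ℕ :=
  if h : ∃ l, l ≤ 2 * m + 1 ∧ l ≠ k ∧ mapD a l = mapD a k then h.choose else k

lemma paD_spec {m : ℕ} {a : ℕ → ℕ} {k : ℕ}
    (h : ∃ l, l ≤ 2 * m + 1 ∧ l ≠ k ∧ mapD a l = mapD a k) :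
    paD m a k ≤ 2 * m + 1 ∧ paD m a k ≠ k ∧ mapD a (paD m a k) = mapD a k := by
  rw [paD, dif_pos h]; exact h.choose_spec

lemma not_isol_iff {m : ℕ} {a : ℕ → ℕ} {k : ℕ} (hk : k ≤ 2 * m + 1) :
    ¬ IsIsolD m a k ↔ ∃ l, l ≤ 2 * m + 1 ∧ l ≠ k ∧ mapD a l = mapD a k := by
  unfold IsIsolD
  push_neg
  constructor
  · intro h; exact h hk
  · intro h _; exact h

lemma partner_unique {m : ℕ} {a : ℕ → ℕ}
    (hdist : ∀ i j, i ≤ 2*m+1 → j ≤ 2*m+1 → i ≠ j → i % 2 = j % 2 → mapD a i ≠ mapD a j)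
    {k l l' : ℕ} (hk : k ≤ 2*m+1) (hl : l ≤ 2*m+1) (hl' : l' ≤ 2*m+1)
    (hne : l ≠ k) (hne' : l' ≠ k) (hb : mapD a l = mapD a k) (hb' : mapD a l' = mapD a k) :
    l = l' := by
  have hp : l % 2 ≠ k % 2 := fun h => hdist l k hl hk hne h hb
  have hp' : l' % 2 ≠ k % 2 := fun h => hdist l' k hl' hk hne' h hb'
  by_contra hc
  exact hdist l l' hl hl' hc (by omega) (hb.trans hb'.symm)

lemma paD_invol {m : ℕ} {a : ℕ → ℕ}
    (hdist : ∀ i j, i ≤ 2*m+1 → j ≤ 2*m+1 → i ≠ j → i % 2 = j % 2 → mapD a i ≠ mapD a j)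
    {k : ℕ} (hk : k ≤ 2*m+1) (hni : ¬ IsIsolD m a k) :
    paD m a (paD m a k) = k := by
  have hex := (not_isol_iff hk).1 hni
  obtain ⟨h1, h2, h3⟩ := paD_spec hex
  have hex' : ∃ l, l ≤ 2*m+1 ∧ l ≠ paD m a k ∧ mapD a l = mapD a (paD m a k) :=
    ⟨k, hk, fun h => h2 h.symm, h3.symm⟩
  obtain ⟨g1, g2, g3⟩ := paD_spec hex'
  exact partner_unique hdist h1 g1 hk g2 (fun h => h2 h.symm) g3 h3.symm

lemma even_ni {m : ℕ} {a : ℕ → ℕ}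
    (hdist : ∀ i j, i ≤ 2*m+1 → j ≤ 2*m+1 → i ≠ j → i % 2 = j % 2 → mapD a i ≠ mapD a j)
    (c : ℕ) (hc : c ≤ 2 * m + 2)
    (hadj : ∀ k, k < c → ¬ IsIsolD m a k → paD m a k < c) :
    Even ((Finset.range c).filter (fun k => ¬ IsIsolD m a k)).card := by
  set NI := (Finset.range c).filter (fun k => ¬ IsIsolD m a k) with hNI
  have hmem : ∀ k, k ∈ NI ↔ k < c ∧ ¬ IsIsolD m a k := by
    intro k; simp [hNI]
  have hpa : ∀ k ∈ NI, paD m a k ∈ NI ∧ paD m a k % 2 ≠ k % 2 := by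
    intro k hk
    rw [hmem] at hk
    have hk2 : k ≤ 2*m+1 := by omega
    have hex := (not_isol_iff hk2).1 hk.2
    obtain ⟨h1, h2, h3⟩ := paD_spec hex
    have hnip : ¬ IsIsolD m a (paD m a k) :=
      (not_isol_iff h1).2 ⟨k, hk2, fun h => h2 h.symm, h3.symm⟩
    refine ⟨(hmem _).2 ⟨hadj k hk.1 hk.2, hnip⟩, fun h => hdist _ k h1 hk2 h2 h h3⟩
  have key : (NI.filter (fun k => k % 2 = 0)).card = (NI.filter (fun k => ¬ k % 2 = 0)).card := by
    apply Finset.card_nbij' (paD m a) (paD m a)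
    · intro k hk
      simp only [Finset.mem_coe, Finset.mem_filter] at hk ⊢
      obtain ⟨hin, hp⟩ := hpa k hk.1
      exact ⟨hin, by omega⟩
    · intro k hk
      simp only [Finset.mem_coe, Finset.mem_filter] at hk ⊢
      obtain ⟨hin, hp⟩ := hpa k hk.1
      exact ⟨hin, by omega⟩
    · intro k hk
      rw [Finset.mem_coe, Finset.mem_filter, hmem] at hk
      exact paD_invol hdist (by have := hk.1.1; omega) hk.1.2
    · intro k hk
      rw [Finset.mem_coe, Finset.mem_filter, hmem] at hk
      exact paD_invol hdist (by have := hk.1.1; omega) hk.1.2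
  have hsplit := Finset.card_filter_add_card_filter_not (s := NI) (p := fun k => k % 2 = 0)
  rw [Nat.even_iff]; omega

/-- A type-D u-symbol has an even number of isolated points; and if `i(a)` is
special then, numbering the isolated points `K 0, …, K (N-1)` so that the
corresponding entries of `i(a)` increase, `K t ≡ t (mod 2)` for every `t`. -/
theorem stmt18 (n m : ℕ) (hn : 1 ≤ n) (hm : 1 ≤ m) (a : ℕ → ℕ)
    (ha : IsUSymD n m a) :
    Even ((Finset.range (2 * m + 2)).filter (IsIsolD m a)).card ∧
    (SpecialD m a →
      ∀ N K, EnumD m a N K → ∀ t, t < N → K t % 2 = t % 2) := by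
  obtain ⟨hstep0, hsum, hstar⟩ := ha
  have hlb : ∀ i, i ≤ 2 * m + 1 → 2 * (i / 2) ≤ a i := by
    intro i
    induction i using Nat.strong_induction_on with
    | _ i ih =>
      intro hi
      rcases Nat.lt_or_ge i 2 with h | h
      · interval_cases i <;> simp
      · have h2 := hstep0 (i - 2) (by omega)
        have h3 := ih (i - 2) (by omega) (by omega)
        rw [show i - 2 + 2 = i by omega] at h2
        omega
  have hstep : ∀ i, i + 2 ≤ 2 * m + 1 → mapD a i < mapD a (i + 2) := by
    intro i hi
    have h1 := hstep0 i hi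
    have h2 := hlb i (by omega)
    simp only [mapD]
    omega
  have hsm : ∀ i j, i < j → j ≤ 2 * m + 1 → i % 2 = j % 2 → mapD a i < mapD a j := by
    intro i j
    induction j using Nat.strong_induction_on with
    | _ j ih =>
      intro hij hj hp
      rcases eq_or_lt_of_le (show i + 2 ≤ j by omega) with h | h
      · rw [← h]; exact hstep i (by omega)
      · have h1 := ih (j - 2) (by omega) (by omega) (by omega) (by omega)
        have h2 := hstep (j - 2) (by omega)
        rw [show j - 2 + 2 = j by omega] at h2
        omega
  have hdist : ∀ i j, i ≤ 2*m+1 → j ≤ 2*m+1 → i ≠ j → i % 2 = j % 2 →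
      mapD a i ≠ mapD a j := by
    intro i j hi hj hne hp
    rcases lt_or_gt_of_ne hne with h | h
    · exact Nat.ne_of_lt (hsm i j h hj hp)
    · exact Nat.ne_of_gt (hsm j i h hi hp.symm)
  constructor
  · have he := even_ni hdist (2 * m + 2) le_rfl (fun k hk hni => by
      have := (paD_spec ((not_isol_iff (by omega)).1 hni)).1
      omega)
    have hsplit := Finset.card_filter_add_card_filter_not
      (s := Finset.range (2 * m + 2)) (p := IsIsolD m a)
    rw [Finset.card_range] at hsplit
    rw [Nat.even_iff] at he ⊢
    omega
  · intro hsp N K hK t htN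
    have hmono : ∀ i j, i ≤ j → j ≤ 2 * m + 1 → mapD a i ≤ mapD a j := by
      intro i j
      induction j with
      | zero => intro h _; rw [Nat.le_zero.mp h]
      | succ j ih =>
        intro hij hj
        rcases eq_or_lt_of_le hij with h | h
        · rw [h]
        · exact le_trans (ih (by omega) (by omega)) (hsp j hj)
    have hKiso := hK.1
    have hKlt : ∀ s t, s < t → t < N → K s < K t := by
      intro s t hst ht
      by_contra h
      push_neg at h
      exact absurd (hK.2.2 s t hst ht)
        (not_lt.2 (hmono _ _ h (hKiso s (hst.trans ht)).1))
    have hKt_iso := hKiso t htN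
    have hKt_le := hKt_iso.1
    -- adjacency of partners under specialness
    have hadjlem : ∀ k, k ≤ 2*m+1 → ¬ IsIsolD m a k →
        paD m a k = k + 1 ∨ paD m a k + 1 = k := by
      intro k hk hni
      have hex := (not_isol_iff hk).1 hni
      obtain ⟨h1, h2, h3⟩ := paD_spec hex
      by_contra hcon
      push_neg at hcon
      rcases lt_or_gt_of_ne h2 with h | h
      · have hs := hstep (paD m a k) (by omega)
        have hmm := hmono (paD m a k + 2) k (by omega) hk
        omega
      · have hs := hstep k (by omega)
        have hmm := hmono (k + 2) (paD m a k) (by omega) h1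
        omega
    have he := even_ni hdist (K t) (by omega) (by
      intro k hk hni
      have hk2 : k ≤ 2 * m + 1 := by omega
      have hex := (not_isol_iff hk2).1 hni
      obtain ⟨h1, h2, h3⟩ := paD_spec hex
      rcases hadjlem k hk2 hni with h | h
      · have hnip : ¬ IsIsolD m a (paD m a k) :=
          (not_isol_iff h1).2 ⟨k, hk2, fun hh => h2 hh.symm, h3.symm⟩
        have : paD m a k ≠ K t := fun hh => hnip (hh ▸ hKt_iso)
        omega
      · omega)
    have hcount : ((Finset.range (K t)).filter (IsIsolD m a)).card = t := by
      have hb : (Finset.range t).card =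
          ((Finset.range (K t)).filter (IsIsolD m a)).card := by
        apply Finset.card_bij (i := fun s _ => K s)
        · intro s hs
          rw [Finset.mem_range] at hs
          rw [Finset.mem_filter, Finset.mem_range]
          exact ⟨hKlt s t hs htN, hKiso s (hs.trans htN)⟩
        · intro s hs s' hs' hss
          rw [Finset.mem_range] at hs hs'
          by_contra hne
          rcases lt_or_gt_of_ne hne with h | h
          · exact absurd (hK.2.2 s s' h (hs'.trans htN)) (by rw [hss]; omega)
          · exact absurd (hK.2.2 s' s h (hs.trans htN)) (by rw [hss]; omega)
        · intro j hj
          rw [Finset.mem_filter, Finset.mem_range] at hj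
          obtain ⟨s, hsN, hKs⟩ := hK.2.1 j hj.2
          refine ⟨s, ?_, hKs⟩
          rw [Finset.mem_range]
          by_contra h
          push_neg at h
          rcases eq_or_lt_of_le h with hh | hh
          · rw [hh, hKs] at hj; omega
          · have := hKlt t s hh hsN
            omega
      rw [Finset.card_range] at hb
      omega
    have hsplit := Finset.card_filter_add_card_filter_not
      (s := Finset.range (K t)) (p := IsIsolD m a)
    rw [Finset.card_range, hcount] at hsplit
    rw [Nat.even_iff] at he
    omega
end

section
/- Let a be a distinguished type-D u-symbol having at least one block, and let B(a) denote the set of all blocks of a. Then for every subset μ ⊆ B(a), the twist a^μ of a by μ is a well-defined sequence satisfying all the defining conditions of a type-D u-symbol except possibly condition (⋆), and exactly one of a^μ and a^{μ Δ B(a)} satisfies condition (⋆) (here Δ denotes symmetric difference). Consequently, the set T(a) of subsets μ ⊆ B(a) for which a^μ is a valid type-D u-symbol is a transversal in the power set of B(a) of the two-element subgroup {∅, B(a)}. -/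
open scoped Classical

/-- `[k,l]` is a block of `a`: a union of consecutive parts `P 0, …, P (r-1)`,
where `P 0` and `P (r-1)` are ladders, `P (r-1)` is the unique part with odd
top, and `P 0` is the unique part with even bottom. -/
def IsBlockD (m : ℕ) (a : ℕ → ℕ) (k l : ℕ) : Prop :=
  ∃ (r : ℕ) (P : ℕ → ℕ × ℕ), 0 < r ∧ (P 0).1 = k ∧ (P (r - 1)).2 = l ∧
    (∀ s, s < r → IsPartD m a (P s).1 (P s).2) ∧
    (∀ s, s + 1 < r → (P (s + 1)).1 = (P s).2 + 1) ∧
    IsLadderD m a (P 0).1 (P 0).2 ∧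
    IsLadderD m a (P (r - 1)).1 (P (r - 1)).2 ∧
    (∀ s, s < r → (Odd ((P s).2) ↔ s = r - 1)) ∧
    (∀ s, s < r → (Even ((P s).1) ↔ s = 0))

/-- The multiset of entries of `c` in even positions (the "upper row"). -/
def rowED (m : ℕ) (c : ℕ → ℕ) : Multiset ℕ :=
  (Multiset.range (m + 1)).map fun t => c (2 * t)

/-- The multiset of entries of `c` in odd positions (the "lower row"). -/
def rowOD (m : ℕ) (c : ℕ → ℕ) : Multiset ℕ :=
  (Multiset.range (m + 1)).map fun t => c (2 * t + 1)

/-- `c'` is the twist of `c` (a sequence with index set `{0,…,2m+1}`) by the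
subset `ν`: each entry of `c` at an index of `ν` is distinct from all other
entries; the rows of `c'` are arranged in increasing order; the new upper row
consists of the old upper-row entries not moved together with the moved
lower-row entries, and symmetrically for the new lower row.  (Condition (⋆) is
not required here.) -/
def IsTwistD (m : ℕ) (c : ℕ → ℕ) (ν : Finset ℕ) (c' : ℕ → ℕ) : Prop :=
  (∀ i ∈ ν, i ≤ 2 * m + 1) ∧
  (∀ i ∈ ν, ∀ j ≤ 2 * m + 1, j ≠ i → c j ≠ c i) ∧
  (∀ j, j + 2 ≤ 2 * m + 1 → c' j < c' (j + 2)) ∧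
  rowED m c' = (rowED m c).filter (fun v => v ∉ ν.image c) +
    (rowOD m c).filter (fun v => v ∈ ν.image c) ∧
  rowOD m c' = (rowOD m c).filter (fun v => v ∉ ν.image c) +
    (rowED m c).filter (fun v => v ∈ ν.image c)

/-- The set `B(a)` of blocks of `a`, as a finite set of pairs `(k,l)`. -/
noncomputable def blocksD (m : ℕ) (a : ℕ → ℕ) : Finset (ℕ × ℕ) :=
  ((Finset.range (2 * m + 2)) ×ˢ (Finset.range (2 * m + 2))).filter fun p =>
    IsBlockD m a p.1 p.2

/-- The set of indices lying in a ladder contained in some block of `μ`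
(twisting by a set of blocks means twisting by the union of their ladders). -/
noncomputable def ladderIdxSetD (m : ℕ) (a : ℕ → ℕ) (μ : Finset (ℕ × ℕ)) : Finset ℕ :=
  (Finset.range (2 * m + 2)).filter fun j =>
    ∃ p ∈ μ, ∃ k' l', IsLadderD m a k' l' ∧ p.1 ≤ k' ∧ l' ≤ p.2 ∧ k' ≤ j ∧ j ≤ l'

/-- `μ ∈ T(a)`: the twist of `a` by the set of blocks `μ` is a valid type-D
u-symbol of rank `n`. -/
def TwistValidD (n m : ℕ) (a : ℕ → ℕ) (μ : Finset (ℕ × ℕ)) : Prop :=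
  ∃ c', IsTwistD m a (ladderIdxSetD m a μ) c' ∧ IsUSymD n m c'

section UDaux

variable {m : ℕ} {a : ℕ → ℕ}

/-- monotonicity up to index `2m+1`. -/
lemma UD.mono (hd : DistD m a) : ∀ u v, u ≤ v → v ≤ 2 * m + 1 → a u ≤ a v := by
  intro u v huv hv
  induction v with
  | zero =>
    have h0 : u = 0 := by omega
    simp [h0]
  | succ v ih =>
    rcases Nat.lt_or_ge u (v+1) with h | h
    · exact le_trans (ih (by omega) (by omega)) (hd v (by omega))
    · have h0 : u = v + 1 := by omega
      subst h0
      exact le_refl _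

lemma UD.ladder_stair_same {k l : ℕ} (hL : IsLadderD m a k l) (hS : IsStairD m a k l) :
    False := by
  obtain ⟨hkl, hlM, hval, _, _⟩ := hL
  obtain ⟨_, _, hodd, hval2, _, _⟩ := hS
  have hkl' : k + 1 ≤ l := by omega
  have h1 := hval (k+1) (by omega) (by omega)
  have h2 := hval2 (k+1) (by omega) (by omega)
  omega

/-- Two ladders sharing an index coincide. -/
lemma UD.ladder_unique {k l k' l' j : ℕ} (h1 : IsLadderD m a k l) (h2 : IsLadderD m a k' l')
    (hj1 : k ≤ j) (hj2 : j ≤ l) (hj3 : k' ≤ j) (hj4 : j ≤ l') : k = k' ∧ l = l' := by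
  obtain ⟨hkl, hlM, hval, hbot, htop⟩ := h1
  obtain ⟨hkl', hlM', hval', hbot', htop'⟩ := h2
  have hbots : ∀ u u' v v' : ℕ, u ≤ j → j ≤ v → u' ≤ j → j ≤ v' →
      (∀ i, u ≤ i → i ≤ v → a i = a u + (i - u)) →
      (0 < u' → a (u'-1) + 1 < a u') → ¬ (u < u') := by
    intro u u' v v' h1 h2 h3 h4 hva hbo hlt
    have e1 := hva (u'-1) (by omega) (by omega)
    have e2 := hva u' (by omega) (by omega)
    have := hbo (by omega)
    omega
  have hk : k = k' := by
    rcases Nat.lt_trichotomy k k' with h | h | h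
    · exact absurd h (hbots k k' l l hj1 hj2 hj3 hj2 hval hbot')
    · exact h
    · exact absurd h (hbots k' k l' l' hj3 hj4 hj1 hj4 hval' hbot)
  have htops : ∀ u u' v v' : ℕ, u ≤ j → j ≤ v → u' ≤ j → j ≤ v' → v' ≤ 2*m+1 →
      (∀ i, u' ≤ i → i ≤ v' → a i = a u' + (i - u')) →
      (v < 2*m+1 → a v + 1 < a (v+1)) → ¬ (v < v') := by
    intro u u' v v' h1 h2 h3 h4 h5 hva hto hlt
    have e1 := hva v (by omega) (by omega)
    have e2 := hva (v+1) (by omega) (by omega)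
    have := hto (by omega)
    omega
  have hl : l = l' := by
    rcases Nat.lt_trichotomy l l' with h | h | h
    · exact absurd h (htops k k' l l' hj1 hj2 hj3 hj4 hlM' hval' htop)
    · exact h
    · exact absurd h (htops k' k l' l hj3 hj4 hj1 hj2 hlM hval htop')
  exact ⟨hk, hl⟩

/-- No index lies both in a ladder and in a staircase. -/
lemma UD.ladder_stair_disj {k l u v j : ℕ} (hL : IsLadderD m a k l) (hS : IsStairD m a u v)
    (hj1 : k ≤ j) (hj2 : j ≤ l) (hj3 : u ≤ j) (hj4 : j ≤ v) : False := by
  obtain ⟨hkl, hlM, hval, hbot, htop⟩ := hL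
  obtain ⟨huv, hvM, hodd, hval2, hbot2, htop2⟩ := hS
  rcases Nat.even_or_odd (j - u) with he | ho
  · -- a j = a (j+1), j+1 ≤ v
    rw [Nat.even_iff] at he
    have hjv : j < v := by omega
    have e1 := hval2 j hj3 hj4
    have e2 := hval2 (j+1) (by omega) (by omega)
    have heq : a j = a (j+1) := by omega
    rcases Nat.lt_or_ge j l with h | h
    · have f1 := hval j hj1 hj2
      have f2 := hval (j+1) (by omega) (by omega)
      omega
    · have hjl : j = l := by omega
      subst hjl
      have := htop (by omega)
      omega
  · rw [Nat.odd_iff] at ho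
    have e1 := hval2 (j-1) (by omega) (by omega)
    have e2 := hval2 j hj3 hj4
    have heq : a (j-1) = a j := by omega
    rcases Nat.lt_or_ge k j with h | h
    · have f1 := hval (j-1) (by omega) (by omega)
      have f2 := hval j hj1 hj2
      omega
    · have hjk : j = k := by omega
      subst hjk
      have := hbot (by omega)
      omega

/-- Two staircases sharing an index coincide. -/
lemma UD.stair_unique (hg : ∀ i, i + 2 ≤ 2*m+1 → a i + 2 ≤ a (i+2)) (hd : DistD m a)
    {k l k' l' j : ℕ} (h1 : IsStairD m a k l) (h2 : IsStairD m a k' l')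
    (hj1 : k ≤ j) (hj2 : j ≤ l) (hj3 : k' ≤ j) (hj4 : j ≤ l') : k = k' ∧ l = l' := by
  have hbots : ∀ u u' v v' : ℕ, u ≤ j → j ≤ v → u' ≤ j → j ≤ v' →
      IsStairD m a u v → IsStairD m a u' v' → ¬ (u < u') := by
    intro u u' v v' h1 h2 h3 h4 hS hS' hlt
    obtain ⟨huv, hvM, hodd, hval, hbot, htop⟩ := hS
    obtain ⟨huv', hvM', hodd', hval', hbot', htop'⟩ := hS'
    rcases Nat.lt_or_ge (u+1) u' with hc | hc
    · -- u' ≥ u + 2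
      have e1 := hval (u'-2) (by omega) (by omega)
      have e2 := hval u' (by omega) (by omega)
      have := hbot' (by omega)
      omega
    · -- u' = u + 1
      have hu' : u' = u + 1 := by omega
      rcases Nat.lt_or_ge (u+1) v with hc2 | hc2
      · -- u + 2 ≤ v
        have e1 := hval (u+1) (by omega) (by omega)
        have e2 := hval (u+2) (by omega) (by omega)
        have e3 := hval' (u+1) (by omega) (by omega)
        have e4 := hval' (u+2) (by omega) (by omega)
        omega
      · -- v = u+1, so j = u+1
        have hv : v = u + 1 := by omega
        subst hv
        rcases Nat.lt_or_ge (u+2) v' with hc3 | hc3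
        · -- v' ≥ u + 3
          have e3 := hval' (u+1) (by omega) (by omega)
          have e4 := hval' (u+2) (by omega) (by omega)
          have e5 := hval' (u+1+2) (by omega) (by omega)
          have := htop (by omega)
          omega
        · -- v' = u + 2
          have hl' : v' = u + 2 := by omega
          have e3 := hval' (u+1) (by omega) (by omega)
          have e4 := hval' (u+2) (by omega) (by omega)
          have e0 := hval u (by omega) (by omega)
          have e1 := hval (u+1) (by omega) (by omega)
          have := hg u (by omega)
          omega
  have hk : k = k' := by
    rcases Nat.lt_trichotomy k k' with h | h | h
    · exact absurd h (hbots k k' l l' hj1 hj2 hj3 hj4 h1 h2)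
    · exact h
    · exact absurd h (hbots k' k l' l hj3 hj4 hj1 hj2 h2 h1)
  have htops : ∀ v v' : ℕ, j ≤ v → j ≤ v' → IsStairD m a k v → IsStairD m a k v' →
      ¬ (v < v') := by
    intro v v' h2 h4 hS hS' hlt
    obtain ⟨huv, hvM, hodd, hval, hbot, htop⟩ := hS
    obtain ⟨huv', hvM', hodd', hval', hbot', htop'⟩ := hS'
    have hvv' : v + 2 ≤ v' := by omega
    have e1 := hval' v (by omega) (by omega)
    have e2 := hval' (v+2) (by omega) (by omega)
    have := htop (by omega)
    omega
  have hl : l = l' := by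
    subst hk
    rcases Nat.lt_trichotomy l l' with h | h | h
    · exact absurd h (htops l l' hj2 hj4 h1 h2)
    · exact h
    · exact absurd h (htops l' l hj4 hj2 h2 h1)
  exact ⟨hk, hl⟩

/-- Parts (ladder-or-staircase) sharing an index coincide. -/
lemma UD.part_unique (hg : ∀ i, i + 2 ≤ 2*m+1 → a i + 2 ≤ a (i+2)) (hd : DistD m a)
    {k l k' l' j : ℕ}
    (h1 : IsLadderD m a k l ∨ IsStairD m a k l) (h2 : IsLadderD m a k' l' ∨ IsStairD m a k' l')
    (hj1 : k ≤ j) (hj2 : j ≤ l) (hj3 : k' ≤ j) (hj4 : j ≤ l') : k = k' ∧ l = l' := by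
  rcases h1 with h1 | h1 <;> rcases h2 with h2 | h2
  · exact UD.ladder_unique h1 h2 hj1 hj2 hj3 hj4
  · exact absurd (UD.ladder_stair_disj h1 h2 hj1 hj2 hj3 hj4) not_false
  · exact absurd (UD.ladder_stair_disj h2 h1 hj3 hj4 hj1 hj2) not_false
  · exact UD.stair_unique hg hd h1 h2 hj1 hj2 hj3 hj4

end UDaux
section UDaux2

variable {m : ℕ} {a : ℕ → ℕ}

lemma UD.part_le {k l : ℕ} (h : IsPartD m a k l) : k ≤ l ∧ l ≤ 2*m+1 := by
  rcases h with h | h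
  · exact ⟨h.1, h.2.1⟩
  · exact ⟨h.1, h.2.1⟩

/-- Structure of a block: parities, boundaries and covering by parts. -/
lemma UD.block_struct {k l : ℕ} (hb : IsBlockD m a k l) :
    Even k ∧ Odd l ∧ k ≤ l ∧ l ≤ 2*m+1 ∧
    (0 < k → a (k-1) + 1 < a k) ∧ (l < 2*m+1 → a l + 1 < a (l+1)) ∧
    (a k < a (k+1)) ∧
    ∀ j, k ≤ j → j ≤ l → ∃ u v, k ≤ u ∧ u ≤ j ∧ j ≤ v ∧ v ≤ l ∧
      ((IsLadderD m a u v ∧ (Even u ↔ u = k) ∧ (Odd v ↔ v = l)) ∨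
       (IsStairD m a u v ∧ ¬ Even u ∧ ¬ Odd v ∧ u ≠ k ∧ v ≠ l)) := by
  obtain ⟨r, P, hr, h0, hlast, hparts, hadj, hL0, hLr, hOdd, hEven⟩ := hb
  have mono1 : ∀ s, s < r → k ≤ (P s).1 ∧ (0 < s → k < (P s).1) := by
    intro s
    induction s with
    | zero => intro _; omega
    | succ s ih =>
      intro hs
      have h1 := (ih (by omega)).1
      have h2 := hadj s (by omega)
      have h3 := (UD.part_le (hparts s (by omega))).1
      omega
  have mono2 : ∀ d s, s + d = r - 1 → s < r → (P s).2 ≤ l ∧ (s < r - 1 → (P s).2 < l) := by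
    intro d
    induction d with
    | zero =>
      intro s hs _
      have hseq : s = r - 1 := by omega
      subst hseq
      exact ⟨le_of_eq hlast, by omega⟩
    | succ d ih =>
      intro s hs hsr
      have h2 := hadj s (by omega)
      have h3 := (UD.part_le (hparts (s+1) (by omega))).1
      have h4 := (ih (s+1) (by omega) (by omega)).1
      omega
  have hEvenk : Even k := by
    have := (hEven 0 hr).mpr rfl
    rwa [h0] at this
  have hOddl : Odd l := by
    have := (hOdd (r-1) (by omega)).mpr rfl
    rwa [hlast] at this
  have hkl : k ≤ l := by
    have h1 := (UD.part_le (hparts 0 hr)).1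
    have h2 := (mono2 (r-1) 0 (by omega) hr).1
    omega
  have hlM : l ≤ 2*m+1 := by
    have := hLr.2.1
    omega
  have hbotb : 0 < k → a (k-1) + 1 < a k := by
    intro hk
    have := hL0.2.2.2.1
    rw [h0] at this
    exact this hk
  have htopb : l < 2*m+1 → a l + 1 < a (l+1) := by
    intro hl
    have := hLr.2.2.2.2
    rw [hlast] at this
    exact this hl
  have hfirst : a k < a (k+1) := by
    obtain ⟨hkl0, hlM0, hval0, hbot0, htop0⟩ := hL0
    rw [h0] at hkl0 hval0
    rcases Nat.lt_or_ge k (P 0).2 with h | h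
    · have e1 := hval0 k (le_refl _) (by omega)
      have e2 := hval0 (k+1) (by omega) (by omega)
      omega
    · have hkk : (P 0).2 = k := by omega
      have hkM : k < 2*m+1 := by
        rcases hEvenk with ⟨t, ht⟩
        omega
      have := htop0 (by omega)
      rw [hkk] at this
      omega
  refine ⟨hEvenk, hOddl, hkl, hlM, hbotb, htopb, hfirst, ?_⟩
  have cover : ∀ t, t < r → ∀ j, k ≤ j → j ≤ (P t).2 →
      ∃ s, s < r ∧ (P s).1 ≤ j ∧ j ≤ (P s).2 := by
    intro t
    induction t with
    | zero =>
      intro _ j hj1 hj2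
      exact ⟨0, hr, by omega, hj2⟩
    | succ t ih =>
      intro ht j hj1 hj2
      rcases Nat.lt_or_ge j (P (t+1)).1 with h | h
      · have h2 := hadj t (by omega)
        exact ih (by omega) j hj1 (by omega)
      · exact ⟨t+1, ht, h, hj2⟩
  intro j hj1 hj2
  have hj2' : j ≤ (P (r-1)).2 := by rw [hlast]; exact hj2
  obtain ⟨s, hs, hu, hv⟩ := cover (r-1) (by omega) j hj1 hj2'
  refine ⟨(P s).1, (P s).2, (mono1 s hs).1, hu, hv, (mono2 (r-1-s) s (by omega) hs).1, ?_⟩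
  have hiffb : (P s).1 = k ↔ s = 0 := by
    constructor
    · intro h
      by_contra hs0
      have := (mono1 s hs).2 (by omega)
      omega
    · intro h; rw [h, h0]
  have hifft : (P s).2 = l ↔ s = r - 1 := by
    constructor
    · intro h
      by_contra hsr
      have := (mono2 (r-1-s) s (by omega) hs).2 (by omega)
      omega
    · intro h; rw [h, hlast]
  rcases hparts s hs with hL | hS
  · left
    refine ⟨hL, ?_, ?_⟩
    · rw [hEven s hs, hiffb]
    · rw [hOdd s hs, hifft]
  · right
    have hs0 : s ≠ 0 := by
      intro h
      rw [h] at hS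
      exact UD.ladder_stair_same hL0 hS
    have hsr : s ≠ r - 1 := by
      intro h
      rw [h] at hS
      exact UD.ladder_stair_same hLr hS
    have he : ¬ Even (P s).1 := by
      rw [hEven s hs]; exact fun h => hs0 h
    have ho : ¬ Odd (P s).2 := by
      rw [hOdd s hs]; exact fun h => hsr h
    refine ⟨hS, he, ho, ?_, ?_⟩
    · intro h; exact he (h ▸ hEvenk)
    · intro h; exact ho (h ▸ hOddl)

/-- Two blocks sharing an index have the same bottom. -/
lemma UD.block_bot_unique (hg : ∀ i, i + 2 ≤ 2*m+1 → a i + 2 ≤ a (i+2)) (hd : DistD m a) :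
    ∀ j k l k2 l2, IsBlockD m a k l → IsBlockD m a k2 l2 →
      k ≤ j → j ≤ l → k2 ≤ j → j ≤ l2 → k = k2 := by
  intro j
  induction j using Nat.strong_induction_on with
  | _ j ih =>
    intro k l k2 l2 hb1 hb2 hj1 hj2 hj3 hj4
    obtain ⟨hE1, hO1, -, -, -, -, -, hcov1⟩ := UD.block_struct hb1
    obtain ⟨hE2, hO2, -, -, -, -, -, hcov2⟩ := UD.block_struct hb2
    obtain ⟨u, v, hku, huj, hjv, hvl, hP1⟩ := hcov1 j hj1 hj2
    obtain ⟨u2, v2, hku2, huj2, hjv2, hvl2, hP2⟩ := hcov2 j hj3 hj4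
    have hparts : u = u2 ∧ v = v2 := by
      apply UD.part_unique hg hd _ _ huj hjv huj2 hjv2
      · rcases hP1 with h | h
        exacts [Or.inl h.1, Or.inr h.1]
      · rcases hP2 with h | h
        exacts [Or.inl h.1, Or.inr h.1]
    obtain ⟨hu12, hv12⟩ := hparts
    by_cases hEu : Even u
    · -- u is the bottom of both blocks
      rcases hP1 with h | h
      · rcases hP2 with h2 | h2
        · rw [← (h.2.1.mp hEu), ← (h2.2.1.mp (hu12 ▸ hEu))]
          omega
        · exact absurd (hu12 ▸ hEu) h2.2.1
      · exact absurd hEu h.2.1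
    · -- recurse at u - 1
      have huk : u ≠ k := by
        intro h; exact hEu (h ▸ hE1)
      have huk2 : u2 ≠ k2 := by
        intro h; rw [← hu12] at h; exact hEu (h ▸ hE2)
      have h1 : 0 < u := by omega
      exact ih (u-1) (by omega) k l k2 l2 hb1 hb2 (by omega) (by omega) (by omega) (by omega)

/-- Two blocks sharing an index have the same top. -/
lemma UD.block_top_unique (hg : ∀ i, i + 2 ≤ 2*m+1 → a i + 2 ≤ a (i+2)) (hd : DistD m a) :
    ∀ d j k l k2 l2, l - j ≤ d → IsBlockD m a k l → IsBlockD m a k2 l2 →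
      k ≤ j → j ≤ l → k2 ≤ j → j ≤ l2 → l = l2 := by
  intro d
  induction d with
  | zero =>
    intro j k l k2 l2 hdj hb1 hb2 hj1 hj2 hj3 hj4
    -- j = l
    obtain ⟨hE1, hO1, -, -, -, -, -, hcov1⟩ := UD.block_struct hb1
    obtain ⟨hE2, hO2, -, -, -, -, -, hcov2⟩ := UD.block_struct hb2
    have hjl : j = l := by omega
    obtain ⟨u2, v2, hku2, huj2, hjv2, hvl2, hP2⟩ := hcov2 j hj3 hj4
    obtain ⟨u, v, hku, huj, hjv, hvl, hP1⟩ := hcov1 j hj1 hj2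
    have hparts : u = u2 ∧ v = v2 := by
      apply UD.part_unique hg hd _ _ huj hjv huj2 hjv2
      · rcases hP1 with h | h
        exacts [Or.inl h.1, Or.inr h.1]
      · rcases hP2 with h | h
        exacts [Or.inl h.1, Or.inr h.1]
    obtain ⟨hu12, hv12⟩ := hparts
    -- v = l since l ≤ v (j = l ≤ v) and v ≤ l
    have hvl' : v = l := by omega
    have hOv : Odd v := hvl' ▸ hO1
    rcases hP2 with h2 | h2
    · have := h2.2.2.mp (hv12 ▸ hOv)
      omega
    · exact absurd (hv12 ▸ hOv) h2.2.2.1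
  | succ d ih =>
    intro j k l k2 l2 hdj hb1 hb2 hj1 hj2 hj3 hj4
    obtain ⟨hE1, hO1, -, -, -, -, -, hcov1⟩ := UD.block_struct hb1
    obtain ⟨hE2, hO2, -, -, -, -, -, hcov2⟩ := UD.block_struct hb2
    obtain ⟨u, v, hku, huj, hjv, hvl, hP1⟩ := hcov1 j hj1 hj2
    obtain ⟨u2, v2, hku2, huj2, hjv2, hvl2, hP2⟩ := hcov2 j hj3 hj4
    have hparts : u = u2 ∧ v = v2 := by
      apply UD.part_unique hg hd _ _ huj hjv huj2 hjv2
      · rcases hP1 with h | h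
        exacts [Or.inl h.1, Or.inr h.1]
      · rcases hP2 with h | h
        exacts [Or.inl h.1, Or.inr h.1]
    obtain ⟨hu12, hv12⟩ := hparts
    by_cases hOv : Odd v
    · rcases hP1 with h | h
      · rcases hP2 with h2 | h2
        · rw [← (h.2.2.mp hOv), ← (h2.2.2.mp (hv12 ▸ hOv))]
          omega
        · exact absurd (hv12 ▸ hOv) h2.2.2.1
      · exact absurd hOv h.2.2.1
    · have hvl'' : v ≠ l := by
        intro h; exact hOv (h ▸ hO1)
      have hvl2'' : v2 ≠ l2 := by
        intro h; rw [← hv12] at h; exact hOv (h ▸ hO2)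
      exact ih (v+1) k l k2 l2 (by omega) hb1 hb2 (by omega) (by omega) (by omega) (by omega)

lemma UD.block_unique (hg : ∀ i, i + 2 ≤ 2*m+1 → a i + 2 ≤ a (i+2)) (hd : DistD m a)
    {j k l k2 l2 : ℕ} (hb1 : IsBlockD m a k l) (hb2 : IsBlockD m a k2 l2)
    (hj1 : k ≤ j) (hj2 : j ≤ l) (hj3 : k2 ≤ j) (hj4 : j ≤ l2) : k = k2 ∧ l = l2 :=
  ⟨UD.block_bot_unique hg hd j k l k2 l2 hb1 hb2 hj1 hj2 hj3 hj4,
   UD.block_top_unique hg hd (l - j) j k l k2 l2 (le_refl _) hb1 hb2 hj1 hj2 hj3 hj4⟩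

/-- Entries in a ladder are isolated: they differ from all other entries. -/
lemma UD.ladder_isol (hd : DistD m a) {k l i : ℕ} (hL : IsLadderD m a k l)
    (hki : k ≤ i) (hil : i ≤ l) :
    ∀ j, j ≤ 2*m+1 → j ≠ i → a j ≠ a i := by
  obtain ⟨hkl, hlM, hval, hbot, htop⟩ := hL
  intro j hj hji
  have hi := hval i hki hil
  rcases Nat.lt_or_ge j k with h | h
  · have h1 : a j ≤ a (k-1) := UD.mono hd j (k-1) (by omega) (by omega)
    have h2 := hbot (by omega)
    omega
  · rcases Nat.lt_or_ge l j with h' | h'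
    · have h1 : a (l+1) ≤ a j := UD.mono hd (l+1) j (by omega) hj
      have h2 := htop (by omega)
      have hlv := hval l hkl (le_refl _)
      omega
    · have hjv := hval j h h'
      omega

end UDaux2
section UDaux3

variable {m : ℕ} {a : ℕ → ℕ}

/-- A maximal run of consecutive entries increasing by 1. -/
lemma UD.run_exists (hg : ∀ i, i + 2 ≤ 2*m+1 → a i + 2 ≤ a (i+2)) (hd : DistD m a) :
    ∀ d p, 2*m+1 ≤ p + d → p ≤ 2*m+1 → (p < 2*m+1 → a p < a (p+1)) →
    ∃ e, p ≤ e ∧ e ≤ 2*m+1 ∧ (∀ j, p ≤ j → j ≤ e → a j = a p + (j - p)) ∧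
      (e < 2*m+1 → a e + 1 < a (e+1)) := by
  intro d
  induction d with
  | zero =>
    intro p h1 h2 h3
    refine ⟨p, le_refl _, h2, ?_, by omega⟩
    intro j hj1 hj2
    have : j = p := by omega
    subst this
    omega
  | succ d ih =>
    intro p h1 h2 h3
    rcases Nat.lt_or_ge p (2*m+1) with hp | hp
    · have hlt := h3 hp
      rcases Nat.lt_or_ge (a p + 1) (a (p+1)) with hc | hc
      · refine ⟨p, le_refl _, h2, ?_, fun _ => hc⟩
        intro j hj1 hj2
        have : j = p := by omega
        subst this
        omega
      · have heq : a (p+1) = a p + 1 := by omega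
        have hnext : p + 1 < 2*m+1 → a (p+1) < a (p+1+1) := by
          intro h
          have h4 := hg p (by omega)
          have e1 := congrArg a (show p + 2 = p+1+1 by omega)
          omega
        obtain ⟨e, he1, he2, he3, he4⟩ := ih (p+1) (by omega) (by omega) hnext
        refine ⟨e, by omega, he2, ?_, he4⟩
        intro j hj1 hj2
        rcases Nat.lt_or_ge j (p+1) with hj | hj
        · have : j = p := by omega
          subst this
          omega
        · have := he3 j hj hj2
          omega
    · -- p = 2m+1
      refine ⟨p, le_refl _, h2, ?_, by omega⟩
      intro j hj1 hj2
      have : j = p := by omega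
      subst this
      omega

/-- A maximal staircase run. -/
lemma UD.stair_run (hg : ∀ i, i + 2 ≤ 2*m+1 → a i + 2 ≤ a (i+2)) (hd : DistD m a) :
    ∀ d p, 2*m+1 ≤ p + d → p + 1 ≤ 2*m+1 → a (p+1) = a p →
    ∃ f, p+1 ≤ f ∧ f ≤ 2*m+1 ∧ (f - p) % 2 = 1 ∧
      (∀ j, p ≤ j → j ≤ f → a j = a p + 2*((j-p)/2)) ∧
      (f + 2 ≤ 2*m+1 → a f + 2 < a (f+2)) := by
  intro d
  induction d with
  | zero =>
    intro p h1 h2 h3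
    omega
  | succ d ih =>
    intro p h1 h2 h3
    by_cases hc : p + 2 + 1 ≤ 2*m+1 ∧ a (p+2) = a p + 2 ∧ a (p+2+1) = a (p+2)
    · obtain ⟨hc1, hc2, hc3⟩ := hc
      obtain ⟨f, hf1, hf2, hf3, hf4, hf5⟩ := ih (p+2) (by omega) (by omega) hc3
      refine ⟨f, by omega, hf2, by omega, ?_, hf5⟩
      intro j hj1 hj2
      rcases Nat.lt_or_ge j (p+2) with hj | hj
      · have e1 := congrArg a (show p + 1 = p+1 by omega)
        have h5 : j = p ∨ j = p + 1 := by omega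
        rcases h5 with h5 | h5 <;> subst h5 <;> omega
      · have := hf4 j hj hj2
        omega
    · refine ⟨p+1, le_refl _, h2, by omega, ?_, ?_⟩
      · intro j hj1 hj2
        have h5 : j = p ∨ j = p + 1 := by omega
        rcases h5 with h5 | h5 <;> subst h5 <;> omega
      · intro hM
        by_contra hlt
        have np1 := congrArg a (show p+1+2 = p+2+1 by omega)
        have hgp := hg p (by omega)
        have hgp1 := hg (p+1) (by omega)
        have hd2 := hd (p+2) (by omega)
        apply hc
        refine ⟨by omega, by omega, by omega⟩

/-- Tail of a block: a chain of parts with odd bottoms ending in a ladder with odd top. -/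
def UDTail (m : ℕ) (a : ℕ → ℕ) (p : ℕ) : Prop :=
  ∃ (r : ℕ) (P : ℕ → ℕ × ℕ), 0 < r ∧ (P 0).1 = p ∧ (∀ s, s < r → IsPartD m a (P s).1 (P s).2) ∧
    (∀ s, s + 1 < r → (P (s+1)).1 = (P s).2 + 1) ∧
    IsLadderD m a (P (r-1)).1 (P (r-1)).2 ∧
    (∀ s, s < r → ¬ Even (P s).1) ∧
    (∀ s, s < r → (Odd (P s).2 ↔ s = r - 1))

lemma UD.tail_prepend {p e : ℕ} (hpart : IsPartD m a p e) (hpo : ¬ Even p) (hee : Even e)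
    (ht : UDTail m a (e+1)) : UDTail m a p := by
  obtain ⟨r, P, hr, h0, hparts, hadj, hlast, hbots, htops⟩ := ht
  refine ⟨r+1, fun s => match s with | 0 => (p, e) | Nat.succ s => P s,
    by omega, rfl, ?_, ?_, ?_, ?_, ?_⟩
  · intro s hs
    rcases s with _ | s
    · exact hpart
    · exact hparts s (by omega)
  · intro s hs
    rcases s with _ | s
    · exact h0
    · exact hadj s (by omega)
  · have hre : r + 1 - 1 = (r - 1) + 1 := by omega
    rw [hre]
    exact hlast
  · intro s hs
    rcases s with _ | s
    · exact hpo
    · exact hbots s (by omega)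
  · intro s hs
    rcases s with _ | s
    · show Odd e ↔ 0 = r + 1 - 1
      constructor
      · intro h
        exact absurd h (Nat.not_odd_iff_even.mpr hee)
      · intro h
        exfalso
        omega
    · show Odd (P s).2 ↔ s + 1 = r + 1 - 1
      rw [htops s (by omega)]
      omega

lemma UD.tail_single {p p' : ℕ} (hL : IsLadderD m a p p') (hpo : ¬ Even p) (hpo' : Odd p') :
    UDTail m a p := by
  refine ⟨1, fun _ => (p, p'), by omega, rfl, fun s _ => Or.inl hL,
    fun s hs => absurd hs (by omega), hL, fun _ _ => hpo, ?_⟩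
  intro s hs
  have hs0 : s = 0 := by omega
  subst hs0
  simpa using hpo'

lemma UD.tail_exists (hg : ∀ i, i + 2 ≤ 2*m+1 → a i + 2 ≤ a (i+2)) (hd : DistD m a) :
    ∀ d p, 2*m+1 ≤ p + d → ¬ Even p → p ≤ 2*m+1 →
    a (p-1) + 2 ≤ a p →
    (p + 1 ≤ 2*m+1 → a (p+1) = a p → 1 < p → a (p-2) + 2 < a p) →
    UDTail m a p := by
  intro d
  induction d with
  | zero =>
    intro p h1 hpo h2 hI hS
    have hp : p = 2*m+1 := by omega
    apply UD.tail_single (p' := p) _ hpo (Nat.not_even_iff_odd.mp hpo)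
    refine ⟨le_refl _, h2, ?_, by omega, by omega⟩
    intro j hj1 hj2
    have : j = p := by omega
    subst this
    omega
  | succ d ih =>
    intro p h1 hpo h2 hI hS
    rcases Nat.lt_or_ge p (2*m+1) with hp | hp
    · -- p < 2m+1
      have hp1 : p % 2 = 1 := Nat.odd_iff.mp (Nat.not_even_iff_odd.mp hpo)
      by_cases hst : a (p+1) = a p
      · -- staircase part at p
        obtain ⟨f, hf1, hf2, hf3, hf4, hf5⟩ := UD.stair_run hg hd (2*m+1-p) p (by omega)
          (by omega) hst
        have hstair : IsStairD m a p f :=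
          ⟨by omega, hf2, hf3, hf4, hS (by omega) hst, hf5⟩
        have hfeven : f % 2 = 0 := by omega
        have hfM : f < 2*m+1 := by omega
        -- values at f-1 and f agree
        have ef1 := hf4 (f-1) (by omega) (by omega)
        have ef2 := hf4 f (by omega) (le_refl _)
        have heq : a (f-1) = a f := by omega
        have hgf := hg (f-1) (by omega)
        have ne1 := congrArg a (show f-1+2 = f+1 by omega)
        have ht : UDTail m a (f+1) := by
          apply ih (f+1) (by omega) (by simp [Nat.even_iff]; omega) (by omega)
          · have ne2 := congrArg a (show f+1-1 = f by omega)
            omega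
          · intro hb1 hb2 hb3
            have ne3 := congrArg a (show f+1-2 = f-1 by omega)
            have ne4 := congrArg a (show f+1+1 = f+2 by omega)
            have := hf5 (by omega)
            omega
        exact UD.tail_prepend (Or.inr hstair) hpo (Nat.even_iff.mpr hfeven) ht
      · -- ladder part at p
        have hlt : a p < a (p+1) := by
          have := hd p (by omega)
          omega
        obtain ⟨e, he1, he2, he3, he4⟩ := UD.run_exists hg hd (2*m+1-p) p (by omega) h2
          (fun _ => hlt)
        have hladder : IsLadderD m a p e := ⟨he1, he2, he3, by omega, he4⟩
        by_cases hee : Even e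
        · -- continue at e+1
          have he0 : e % 2 = 0 := Nat.even_iff.mp hee
          have heM : e < 2*m+1 := by omega
          have htb := he4 heM
          have hpe : p < e := by omega
          have ee1 := he3 (e-1) (by omega) (by omega)
          have ee2 := he3 e (by omega) (le_refl _)
          have ht : UDTail m a (e+1) := by
            apply ih (e+1) (by omega) (by simp [Nat.even_iff]; omega) (by omega)
            · have ne2 := congrArg a (show e+1-1 = e by omega)
              omega
            · intro hb1 hb2 hb3
              have ne3 := congrArg a (show e+1-2 = e-1 by omega)
              omega
          exact UD.tail_prepend (Or.inl hladder) hpo hee ht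
        · exact UD.tail_single hladder hpo (Nat.not_even_iff_odd.mp hee)
    · -- p = 2m+1
      apply UD.tail_single (p' := p) _ hpo (Nat.not_even_iff_odd.mp hpo)
      refine ⟨le_refl _, h2, ?_, by omega, by omega⟩
      intro j hj1 hj2
      have : j = p := by omega
      subst this
      omega

/-- Assemble a block from an initial even-bottom ladder and a tail. -/
lemma UD.block_assemble {p e : ℕ} (hL : IsLadderD m a p e) (hpe : Even p) (hee : Even e)
    (ht : UDTail m a (e+1)) : ∃ L, IsBlockD m a p L ∧ L ≤ 2*m+1 := by
  obtain ⟨r, P, hr, h0, hparts, hadj, hlast, hbots, htops⟩ := ht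
  have hre : r + 1 - 1 = (r - 1) + 1 := by omega
  refine ⟨(P (r-1)).2, ⟨r+1, fun s => match s with | 0 => (p, e) | Nat.succ s => P s,
    by omega, rfl, ?_, ?_, ?_, hL, ?_, ?_, ?_⟩, hlast.2.1⟩
  · rw [hre]
  · intro s hs
    rcases s with _ | s
    · exact Or.inl hL
    · exact hparts s (by omega)
  · intro s hs
    rcases s with _ | s
    · exact h0
    · exact hadj s (by omega)
  · rw [hre]
    exact hlast
  · intro s hs
    rcases s with _ | s
    · show Odd e ↔ 0 = r + 1 - 1
      constructor
      · intro h
        exact absurd h (Nat.not_odd_iff_even.mpr hee)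
      · intro h
        exfalso
        omega
    · show Odd (P s).2 ↔ s + 1 = r + 1 - 1
      rw [htops s (by omega)]
      omega
  · intro s hs
    rcases s with _ | s
    · simpa using hpe
    · show Even (P s).1 ↔ s + 1 = 0
      constructor
      · intro h
        exact absurd h (hbots s (by omega))
      · intro h
        exfalso
        omega

/-- There is a block starting at the first position where a pair of `a` is unequal. -/
lemma UD.block_exists_at (hg : ∀ i, i + 2 ≤ 2*m+1 → a i + 2 ≤ a (i+2)) (hd : DistD m a)
    {i0 : ℕ} (hi0 : i0 ≤ m) (hne : a (2*i0) < a (2*i0+1))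
    (hprev : ∀ i', i' < i0 → a (2*i') = a (2*i'+1)) :
    ∃ L, IsBlockD m a (2*i0) L ∧ L ≤ 2*m+1 := by
  have hbot : 0 < 2*i0 → a (2*i0 - 1) + 1 < a (2*i0) := by
    intro h
    have hp := hprev (i0-1) (by omega)
    have hgp := hg (2*(i0-1)) (by omega)
    have ne1 := congrArg a (show 2*(i0-1)+1 = 2*i0-1 by omega)
    have ne2 := congrArg a (show 2*(i0-1)+2 = 2*i0 by omega)
    omega
  obtain ⟨e, he1, he2, he3, he4⟩ := UD.run_exists hg hd (2*m+1-2*i0) (2*i0) (by omega)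
    (by omega) (fun _ => hne)
  have hladder : IsLadderD m a (2*i0) e := ⟨he1, he2, he3, hbot, he4⟩
  by_cases hee : Even e
  · -- build tail at e+1
    have he0 : e % 2 = 0 := Nat.even_iff.mp hee
    have heM : e < 2*m+1 := by omega
    have htb := he4 heM
    have ht : UDTail m a (e+1) := by
      apply UD.tail_exists hg hd (2*m+1-(e+1)) (e+1) (by omega)
        (by simp [Nat.even_iff]; omega) (by omega)
      · have ne2 := congrArg a (show e+1-1 = e by omega)
        omega
      · intro hb1 hb2 hb3
        have ne3 := congrArg a (show e+1-2 = e-1 by omega)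
        rcases Nat.lt_or_ge (2*i0) e with hpe | hpe
        · have ee1 := he3 (e-1) (by omega) (by omega)
          have ee2 := he3 e (by omega) (le_refl _)
          omega
        · -- e = 2*i0
          have hei : e = 2*i0 := by omega
          have hp := hprev (i0-1) (by omega)
          have hgp := hg (2*(i0-1)) (by omega)
          have ne1 := congrArg a (show 2*(i0-1)+1 = e-1 by omega)
          have ne2 := congrArg a (show 2*(i0-1)+2 = e by omega)
          have ne4 := congrArg a (show 2*i0 = e by omega)
          have ne5 := congrArg a (show 2*i0+1 = e+1 by omega)
          omega
    exact UD.block_assemble hladder ⟨i0, by omega⟩ hee ht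
  · refine ⟨e, ⟨1, fun _ => (2*i0, e), by omega, rfl, rfl, fun s _ => Or.inl hladder,
      fun s hs => absurd hs (by omega), hladder, hladder, ?_, ?_⟩, he2⟩
    · intro s hs
      have hs0 : s = 0 := by omega
      subst hs0
      simpa using Nat.not_even_iff_odd.mp hee
    · intro s hs
      have hs0 : s = 0 := by omega
      subst hs0
      simpa using ⟨i0, by omega⟩

end UDaux3
section UDtwist

variable {m : ℕ} {a : ℕ → ℕ}

/-- `j` lies in one of the blocks of `μ`. -/
def UDBIdx (μ : Finset (ℕ × ℕ)) (j : ℕ) : Prop := ∃ p ∈ μ, p.1 ≤ j ∧ j ≤ p.2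

/-- The explicit twist: swap the two entries of each pair inside a `μ`-block. -/
noncomputable def UDc (a : ℕ → ℕ) (μ : Finset (ℕ × ℕ)) : ℕ → ℕ :=
  fun j => if UDBIdx μ j then (if j % 2 = 0 then a (j+1) else a (j-1)) else a j

lemma UD.mem_block {μ : Finset (ℕ × ℕ)} (hμ : μ ⊆ blocksD m a) {p : ℕ × ℕ} (hp : p ∈ μ) :
    IsBlockD m a p.1 p.2 := (Finset.mem_filter.mp (hμ hp)).2

lemma UD.bidx_pair {μ : Finset (ℕ × ℕ)} (hμ : μ ⊆ blocksD m a) (t : ℕ) :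
    UDBIdx μ (2*t) ↔ UDBIdx μ (2*t+1) := by
  constructor
  · rintro ⟨p, hp, h1, h2⟩
    obtain ⟨hE, hO, -⟩ := UD.block_struct (UD.mem_block hμ hp)
    rw [Nat.even_iff] at hE
    rw [Nat.odd_iff] at hO
    exact ⟨p, hp, by omega, by omega⟩
  · rintro ⟨p, hp, h1, h2⟩
    obtain ⟨hE, hO, -⟩ := UD.block_struct (UD.mem_block hμ hp)
    rw [Nat.even_iff] at hE
    rw [Nat.odd_iff] at hO
    exact ⟨p, hp, by omega, by omega⟩

lemma UD.c_even (μ : Finset (ℕ × ℕ)) (t : ℕ) :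
    UDc a μ (2*t) = if UDBIdx μ (2*t) then a (2*t+1) else a (2*t) := by
  have h : (2*t) % 2 = 0 := by omega
  by_cases hb : UDBIdx μ (2*t) <;> simp [UDc, hb, h]

lemma UD.c_odd (μ : Finset (ℕ × ℕ)) (t : ℕ) :
    UDc a μ (2*t+1) = if UDBIdx μ (2*t+1) then a (2*t) else a (2*t+1) := by
  have h1 : ¬ ((2*t+1) % 2 = 0) := by omega
  have h2 : 2*t+1-1 = 2*t := by omega
  by_cases hb : UDBIdx μ (2*t+1) <;> simp [UDc, hb, h1, h2]

lemma UD.c_gap (hg : ∀ i, i + 2 ≤ 2*m+1 → a i + 2 ≤ a (i+2)) (hd : DistD m a)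
    {μ : Finset (ℕ × ℕ)} (hμ : μ ⊆ blocksD m a) :
    ∀ j, j + 2 ≤ 2*m+1 → UDc a μ j + 2 ≤ UDc a μ (j+2) := by
  intro j hj
  obtain ⟨t, ht | ht⟩ := Nat.even_or_odd' j <;> subst ht
  · -- even
    have e0 : 2*t+2 = 2*(t+1) := by ring
    rw [e0, UD.c_even, UD.c_even]
    by_cases hb1 : UDBIdx μ (2*t) <;> by_cases hb2 : UDBIdx μ (2*(t+1)) <;>
      [skip; skip; skip; skip]
    · rw [if_pos hb1, if_pos hb2]
      have h1 := hg (2*t+1) (by omega)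
      have ne1 := congrArg a (show 2*t+1+2 = 2*(t+1)+1 by ring)
      omega
    · rw [if_pos hb1, if_neg hb2]
      obtain ⟨p, hp, h1, h2⟩ := hb1
      obtain ⟨hE, hO, -, -, hbb, hbt, -⟩ := UD.block_struct (UD.mem_block hμ hp)
      rw [Nat.even_iff] at hE
      rw [Nat.odd_iff] at hO
      have htop : p.2 = 2*t+1 := by
        rcases Nat.lt_or_ge p.2 (2*(t+1)) with h | h
        · omega
        · exact absurd ⟨p, hp, by omega, by omega⟩ hb2
      have h3 := hbt (by omega)
      have ne1 := congrArg a (show p.2 + 1 = 2*(t+1) by omega)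
      have ne2 := congrArg a (show p.2 = 2*t+1 from htop)
      omega
    · rw [if_neg hb1, if_pos hb2]
      have h1 := hg (2*t) (by omega)
      have h2 := hd (2*t+2) (by omega)
      have ne1 := congrArg a (show 2*t+2 = 2*(t+1) by ring)
      have ne2 := congrArg a (show 2*t+2+1 = 2*(t+1)+1 by ring)
      omega
    · rw [if_neg hb1, if_neg hb2]
      have h1 := hg (2*t) (by omega)
      have ne1 := congrArg a (show 2*t+2 = 2*(t+1) by ring)
      omega
  · -- odd
    have e0 : 2*t+1+2 = 2*(t+1)+1 := by ring
    rw [e0, UD.c_odd, UD.c_odd]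
    by_cases hb1 : UDBIdx μ (2*t+1) <;> by_cases hb2 : UDBIdx μ (2*(t+1)+1) <;>
      [skip; skip; skip; skip]
    · rw [if_pos hb1, if_pos hb2]
      have h1 := hg (2*t) (by omega)
      have ne1 := congrArg a (show 2*t+2 = 2*(t+1) by ring)
      omega
    · rw [if_pos hb1, if_neg hb2]
      have h1 := hg (2*t) (by omega)
      have h2 := hd (2*t+2) (by omega)
      have ne1 := congrArg a (show 2*t+2 = 2*(t+1) by ring)
      have ne2 := congrArg a (show 2*t+2+1 = 2*(t+1)+1 by ring)
      omega
    · rw [if_neg hb1, if_pos hb2]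
      obtain ⟨p, hp, h1, h2⟩ := hb2
      obtain ⟨hE, hO, -, -, hbb, hbt, -⟩ := UD.block_struct (UD.mem_block hμ hp)
      rw [Nat.even_iff] at hE
      rw [Nat.odd_iff] at hO
      have hbotp : p.1 = 2*t+2 := by
        rcases Nat.lt_or_ge (2*t+1) p.1 with h | h
        · omega
        · exact absurd ⟨p, hp, by omega, by omega⟩ hb1
      have h3 := hbb (by omega)
      have ne1 := congrArg a (show p.1 - 1 = 2*t+1 by omega)
      have ne2 := congrArg a (show p.1 = 2*(t+1) by omega)
      omega
    · rw [if_neg hb1, if_neg hb2]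
      have h1 := hg (2*t+1) (by omega)
      have ne1 := congrArg a (show 2*t+1+2 = 2*(t+1)+1 by ring)
      omega

lemma UD.nu_mem {μ : Finset (ℕ × ℕ)} {j : ℕ} :
    j ∈ ladderIdxSetD m a μ ↔ j < 2*m+2 ∧
      ∃ p ∈ μ, ∃ k' l', IsLadderD m a k' l' ∧ p.1 ≤ k' ∧ l' ≤ p.2 ∧ k' ≤ j ∧ j ≤ l' := by
  simp [ladderIdxSetD]

lemma UD.nu_bidx {μ : Finset (ℕ × ℕ)} {j : ℕ} (h : j ∈ ladderIdxSetD m a μ) : UDBIdx μ j := by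
  obtain ⟨-, p, hp, k', l', hL, h1, h2, h3, h4⟩ := UD.nu_mem.mp h
  exact ⟨p, hp, by omega, by omega⟩

lemma UD.nu_isol (hd : DistD m a) {μ : Finset (ℕ × ℕ)} {i : ℕ}
    (hi : i ∈ ladderIdxSetD m a μ) : ∀ j, j ≤ 2*m+1 → j ≠ i → a j ≠ a i := by
  obtain ⟨-, p, hp, k', l', hL, h1, h2, h3, h4⟩ := UD.nu_mem.mp hi
  exact fun j hj hji => UD.ladder_isol hd hL h3 h4 j hj hji

lemma UD.nu_image (hd : DistD m a) {μ : Finset (ℕ × ℕ)} {u : ℕ} (hu : u ≤ 2*m+1) :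
    a u ∈ (ladderIdxSetD m a μ).image a ↔ u ∈ ladderIdxSetD m a μ := by
  constructor
  · intro h
    obtain ⟨i, hi, hai⟩ := Finset.mem_image.mp h
    by_cases hiu : i = u
    · exact hiu ▸ hi
    · exact absurd hai.symm (UD.nu_isol hd hi u hu (Ne.symm hiu))
  · exact fun h => Finset.mem_image_of_mem a h

lemma UD.stair_not_nu {μ : Finset (ℕ × ℕ)} {u v j : ℕ} (hS : IsStairD m a u v)
    (h1 : u ≤ j) (h2 : j ≤ v) : j ∉ ladderIdxSetD m a μ := by
  intro hj
  obtain ⟨-, p, hp, k', l', hL, hh1, hh2, hh3, hh4⟩ := UD.nu_mem.mp hj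
  exact UD.ladder_stair_disj hL hS hh3 hh4 h1 h2

lemma UD.nu_of_ladder {μ : Finset (ℕ × ℕ)} {p : ℕ × ℕ} {k' l' j : ℕ} (hp : p ∈ μ)
    (hL : IsLadderD m a k' l') (h1 : p.1 ≤ k') (h2 : l' ≤ p.2) (h3 : k' ≤ j) (h4 : j ≤ l') :
    j ∈ ladderIdxSetD m a μ :=
  UD.nu_mem.mpr ⟨by have := hL.2.1; omega, p, hp, k', l', hL, h1, h2, h3, h4⟩

/-- Indices in a `μ`-block missed by `ν` lie in a staircase contained in the block. -/
lemma UD.bidx_stair (hg : ∀ i, i + 2 ≤ 2*m+1 → a i + 2 ≤ a (i+2)) (hd : DistD m a)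
    {μ : Finset (ℕ × ℕ)} (hμ : μ ⊆ blocksD m a) {j : ℕ}
    (hb : UDBIdx μ j) (hnj : j ∉ ladderIdxSetD m a μ) :
    ∃ u v, IsStairD m a u v ∧ u % 2 = 1 ∧ v % 2 = 0 ∧ u ≤ j ∧ j ≤ v ∧
      ∀ i, u ≤ i → i ≤ v → (UDBIdx μ i ∧ i ∉ ladderIdxSetD m a μ) := by
  obtain ⟨p, hp, h1, h2⟩ := hb
  obtain ⟨hE, hO, -, -, -, -, -, hcov⟩ := UD.block_struct (UD.mem_block hμ hp)
  obtain ⟨u, v, hku, huj, hjv, hvl, hP⟩ := hcov j h1 h2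
  rcases hP with ⟨hL, -⟩ | ⟨hS, hnEu, hnOv, -, -⟩
  · exact absurd (UD.nu_of_ladder hp hL hku hvl huj hjv) hnj
  · refine ⟨u, v, hS, ?_, ?_, huj, hjv, ?_⟩
    · rw [Nat.even_iff] at hnEu
      omega
    · rw [Nat.odd_iff] at hnOv
      omega
    · intro i hi1 hi2
      exact ⟨⟨p, hp, by omega, by omega⟩, UD.stair_not_nu hS hi1 hi2⟩

lemma UD.stair_pair {u v : ℕ} (hS : IsStairD m a u v) :
    (∀ j, u ≤ j → j ≤ v → (j - u) % 2 = 0 → a j = a (j+1) ∧ j + 1 ≤ v) ∧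
    (∀ j, u ≤ j → j ≤ v → (j - u) % 2 = 1 → a (j-1) = a j ∧ u ≤ j - 1 ∧ 1 ≤ j) := by
  obtain ⟨huv, hvM, hodd, hval, -, -⟩ := hS
  constructor
  · intro j h1 h2 h3
    have hjv : j + 1 ≤ v := by omega
    have e1 := hval j h1 h2
    have e2 := hval (j+1) (by omega) hjv
    exact ⟨by omega, hjv⟩
  · intro j h1 h2 h3
    have hju : u ≤ j - 1 := by omega
    have e1 := hval (j-1) hju (by omega)
    have e2 := hval j h1 h2
    exact ⟨by omega, hju, by omega⟩

end UDtwist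
section UDrows

variable {m : ℕ} {a : ℕ → ℕ}

lemma UD.chain_even {c : ℕ → ℕ} (h : ∀ j, j + 2 ≤ 2*m+1 → c j < c (j+2)) :
    ∀ s t, s < t → t ≤ m → c (2*s) < c (2*t) := by
  intro s t
  induction t with
  | zero => omega
  | succ t ih =>
    intro hst htm
    have hstep : c (2*t) < c (2*(t+1)) := by
      have h1 := h (2*t) (by omega)
      have e := congrArg c (show 2*t+2 = 2*(t+1) by ring)
      omega
    rcases Nat.lt_or_ge s t with hc | hc
    · have := ih hc (by omega)
      omega
    · have : s = t := by omega
      subst this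
      exact hstep

lemma UD.chain_odd {c : ℕ → ℕ} (h : ∀ j, j + 2 ≤ 2*m+1 → c j < c (j+2)) :
    ∀ s t, s < t → t ≤ m → c (2*s+1) < c (2*t+1) := by
  intro s t
  induction t with
  | zero => omega
  | succ t ih =>
    intro hst htm
    have hstep : c (2*t+1) < c (2*(t+1)+1) := by
      have h1 := h (2*t+1) (by omega)
      have e := congrArg c (show 2*t+1+2 = 2*(t+1)+1 by ring)
      omega
    rcases Nat.lt_or_ge s t with hc | hc
    · have := ih hc (by omega)
      omega
    · have : s = t := by omega
      subst this
      exact hstep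

lemma UD.nodup_even {c : ℕ → ℕ} (h : ∀ j, j + 2 ≤ 2*m+1 → c j < c (j+2)) :
    (rowED m c).Nodup := by
  refine Multiset.Nodup.map_on ?_ (Multiset.nodup_range _)
  intro s hs t ht heq
  rw [Multiset.mem_range] at hs ht
  by_contra hne
  rcases Nat.lt_or_ge s t with hc | hc
  · have := UD.chain_even h s t hc (by omega); omega
  · have := UD.chain_even h t s (by omega) (by omega); omega

lemma UD.nodup_odd {c : ℕ → ℕ} (h : ∀ j, j + 2 ≤ 2*m+1 → c j < c (j+2)) :
    (rowOD m c).Nodup := by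
  refine Multiset.Nodup.map_on ?_ (Multiset.nodup_range _)
  intro s hs t ht heq
  rw [Multiset.mem_range] at hs ht
  by_contra hne
  rcases Nat.lt_or_ge s t with hc | hc
  · have := UD.chain_odd h s t hc (by omega); omega
  · have := UD.chain_odd h t s (by omega) (by omega); omega

lemma UD.mem_rowE {c : ℕ → ℕ} {v : ℕ} : v ∈ rowED m c ↔ ∃ t, t < m + 1 ∧ c (2*t) = v := by
  unfold rowED
  rw [Multiset.mem_map]
  constructor
  · rintro ⟨t, ht, hv⟩
    exact ⟨t, Multiset.mem_range.mp ht, hv⟩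
  · rintro ⟨t, ht, hv⟩
    exact ⟨t, Multiset.mem_range.mpr ht, hv⟩

lemma UD.mem_rowO {c : ℕ → ℕ} {v : ℕ} : v ∈ rowOD m c ↔ ∃ t, t < m + 1 ∧ c (2*t+1) = v := by
  unfold rowOD
  rw [Multiset.mem_map]
  constructor
  · rintro ⟨t, ht, hv⟩
    exact ⟨t, Multiset.mem_range.mp ht, hv⟩
  · rintro ⟨t, ht, hv⟩
    exact ⟨t, Multiset.mem_range.mpr ht, hv⟩

lemma UD.agap (hg : ∀ i, i + 2 ≤ 2*m+1 → a i + 2 ≤ a (i+2)) :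
    ∀ j, j + 2 ≤ 2*m+1 → a j < a (j+2) := fun j hj => by have := hg j hj; omega

/-- The even row of the explicit twist. -/
lemma UD.row_even (hg : ∀ i, i + 2 ≤ 2*m+1 → a i + 2 ≤ a (i+2)) (hd : DistD m a)
    {μ : Finset (ℕ × ℕ)} (hμ : μ ⊆ blocksD m a) :
    rowED m (UDc a μ) =
      Multiset.filter (fun v => v ∉ (ladderIdxSetD m a μ).image a) (rowED m a) +
      Multiset.filter (fun v => v ∈ (ladderIdxSetD m a μ).image a) (rowOD m a) := by
  have hhc : ∀ j, j + 2 ≤ 2*m+1 → UDc a μ j < UDc a μ (j+2) := fun j hj => by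
    have := UD.c_gap hg hd hμ j hj; omega
  have nd1 : (rowED m (UDc a μ)).Nodup := UD.nodup_even hhc
  have nd2 : (Multiset.filter (fun v => v ∉ (ladderIdxSetD m a μ).image a) (rowED m a) +
      Multiset.filter (fun v => v ∈ (ladderIdxSetD m a μ).image a) (rowOD m a)).Nodup := by
    rw [Multiset.nodup_add]
    refine ⟨Multiset.Nodup.filter _ (UD.nodup_even (UD.agap hg)),
      Multiset.Nodup.filter _ (UD.nodup_odd (UD.agap hg)), ?_⟩
    rw [Multiset.disjoint_left]
    intro v hv1 hv2
    rw [Multiset.mem_filter] at hv1 hv2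
    exact hv1.2 hv2.2
  rw [Multiset.Nodup.ext nd1 nd2]
  intro v
  rw [Multiset.mem_add, Multiset.mem_filter, Multiset.mem_filter, UD.mem_rowE, UD.mem_rowE,
    UD.mem_rowO]
  constructor
  · rintro ⟨t, ht, hv⟩
    rw [UD.c_even] at hv
    by_cases hb : UDBIdx μ (2*t)
    · rw [if_pos hb] at hv
      by_cases hn : 2*t+1 ∈ ladderIdxSetD m a μ
      · exact Or.inr ⟨⟨t, ht, hv⟩, by rw [← hv]; exact (UD.nu_image hd (by omega)).mpr hn⟩
      · have hb1 : UDBIdx μ (2*t+1) := (UD.bidx_pair hμ t).mp hb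
        obtain ⟨u, w, hS, hu1, hw0, huj, hjw, hmem⟩ := UD.bidx_stair hg hd hμ hb1 hn
        rcases Nat.even_or_odd (2*t+1-u) with he | ho
        · rw [Nat.even_iff] at he
          obtain ⟨heq, hle⟩ := (UD.stair_pair hS).1 (2*t+1) huj hjw he
          have hwM : w ≤ 2*m+1 := hS.2.1
          refine Or.inl ⟨⟨t+1, by omega, ?_⟩, ?_⟩
          · have ne1 := congrArg a (show 2*(t+1) = 2*t+1+1 by ring)
            omega
          · rw [← hv, heq]
            have hnn := (hmem (2*t+1+1) (by omega) (by omega)).2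
            exact fun hcon => hnn ((UD.nu_image hd (by omega)).mp hcon)
        · rw [Nat.odd_iff] at ho
          obtain ⟨heq, hge, h1⟩ := (UD.stair_pair hS).2 (2*t+1) huj hjw ho
          have ne1 : 2*t+1-1 = 2*t := by omega
          rw [ne1] at heq
          refine Or.inl ⟨⟨t, ht, by omega⟩, ?_⟩
          · rw [← hv, ← heq]
            have hnn := (hmem (2*t) (by omega) (by omega)).2
            exact fun hcon => hnn ((UD.nu_image hd (by omega)).mp hcon)
    · rw [if_neg hb] at hv
      refine Or.inl ⟨⟨t, ht, hv⟩, ?_⟩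
      rw [← hv]
      intro hcon
      exact hb (UD.nu_bidx ((UD.nu_image hd (by omega)).mp hcon))
  · rintro (⟨⟨t, ht, hv⟩, hni⟩ | ⟨⟨t, ht, hv⟩, hin⟩)
    · have hnn : 2*t ∉ ladderIdxSetD m a μ := by
        intro h
        exact hni (by rw [← hv]; exact (UD.nu_image hd (by omega)).mpr h)
      by_cases hb : UDBIdx μ (2*t)
      · obtain ⟨u, w, hS, hu1, hw0, huj, hjw, hmem⟩ := UD.bidx_stair hg hd hμ hb hnn
        rcases Nat.even_or_odd (2*t-u) with he | ho
        · rw [Nat.even_iff] at he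
          obtain ⟨heq, hle⟩ := (UD.stair_pair hS).1 (2*t) huj hjw he
          refine ⟨t, ht, ?_⟩
          rw [UD.c_even, if_pos hb]
          omega
        · rw [Nat.odd_iff] at ho
          obtain ⟨heq, hge, h1⟩ := (UD.stair_pair hS).2 (2*t) huj hjw ho
          have ht1 : 1 ≤ t := by omega
          have hbm : UDBIdx μ (2*(t-1)+1) := by
            have : 2*(t-1)+1 = 2*t-1 := by omega
            rw [this]
            exact (hmem (2*t-1) (by omega) (by omega)).1
          have hbe : UDBIdx μ (2*(t-1)) := (UD.bidx_pair hμ (t-1)).mpr hbm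
          refine ⟨t-1, by omega, ?_⟩
          rw [UD.c_even, if_pos hbe]
          have ne1 := congrArg a (show 2*(t-1)+1 = 2*t-1 by omega)
          omega
      · exact ⟨t, ht, by rw [UD.c_even, if_neg hb]; exact hv⟩
    · have hn : 2*t+1 ∈ ladderIdxSetD m a μ := by
        rw [← hv] at hin
        exact (UD.nu_image hd (by omega)).mp hin
      have hb : UDBIdx μ (2*t) := (UD.bidx_pair hμ t).mpr (UD.nu_bidx hn)
      exact ⟨t, ht, by rw [UD.c_even, if_pos hb]; exact hv⟩

/-- The odd row of the explicit twist. -/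
lemma UD.row_odd (hg : ∀ i, i + 2 ≤ 2*m+1 → a i + 2 ≤ a (i+2)) (hd : DistD m a)
    {μ : Finset (ℕ × ℕ)} (hμ : μ ⊆ blocksD m a) :
    rowOD m (UDc a μ) =
      Multiset.filter (fun v => v ∉ (ladderIdxSetD m a μ).image a) (rowOD m a) +
      Multiset.filter (fun v => v ∈ (ladderIdxSetD m a μ).image a) (rowED m a) := by
  have hhc : ∀ j, j + 2 ≤ 2*m+1 → UDc a μ j < UDc a μ (j+2) := fun j hj => by
    have := UD.c_gap hg hd hμ j hj; omega
  have nd1 : (rowOD m (UDc a μ)).Nodup := UD.nodup_odd hhc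
  have nd2 : (Multiset.filter (fun v => v ∉ (ladderIdxSetD m a μ).image a) (rowOD m a) +
      Multiset.filter (fun v => v ∈ (ladderIdxSetD m a μ).image a) (rowED m a)).Nodup := by
    rw [Multiset.nodup_add]
    refine ⟨Multiset.Nodup.filter _ (UD.nodup_odd (UD.agap hg)),
      Multiset.Nodup.filter _ (UD.nodup_even (UD.agap hg)), ?_⟩
    rw [Multiset.disjoint_left]
    intro v hv1 hv2
    rw [Multiset.mem_filter] at hv1 hv2
    exact hv1.2 hv2.2
  rw [Multiset.Nodup.ext nd1 nd2]
  intro v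
  rw [Multiset.mem_add, Multiset.mem_filter, Multiset.mem_filter, UD.mem_rowO, UD.mem_rowO,
    UD.mem_rowE]
  constructor
  · rintro ⟨t, ht, hv⟩
    rw [UD.c_odd] at hv
    by_cases hb : UDBIdx μ (2*t+1)
    · rw [if_pos hb] at hv
      by_cases hn : 2*t ∈ ladderIdxSetD m a μ
      · exact Or.inr ⟨⟨t, ht, hv⟩, by rw [← hv]; exact (UD.nu_image hd (by omega)).mpr hn⟩
      · have hb0 : UDBIdx μ (2*t) := (UD.bidx_pair hμ t).mpr hb
        obtain ⟨u, w, hS, hu1, hw0, huj, hjw, hmem⟩ := UD.bidx_stair hg hd hμ hb0 hn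
        rcases Nat.even_or_odd (2*t-u) with he | ho
        · rw [Nat.even_iff] at he
          obtain ⟨heq, hle⟩ := (UD.stair_pair hS).1 (2*t) huj hjw he
          refine Or.inl ⟨⟨t, ht, by omega⟩, ?_⟩
          rw [← hv, heq]
          have hnn := (hmem (2*t+1) (by omega) (by omega)).2
          exact fun hcon => hnn ((UD.nu_image hd (by omega)).mp hcon)
        · rw [Nat.odd_iff] at ho
          obtain ⟨heq, hge, h1⟩ := (UD.stair_pair hS).2 (2*t) huj hjw ho
          have ht1 : 1 ≤ t := by omega
          refine Or.inl ⟨⟨t-1, by omega, ?_⟩, ?_⟩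
          · have ne1 := congrArg a (show 2*(t-1)+1 = 2*t-1 by omega)
            omega
          · rw [← hv, ← heq]
            have hnn := (hmem (2*t-1) (by omega) (by omega)).2
            have ne1 := congrArg a (show 2*t-1 = 2*t - 1 by omega)
            exact fun hcon => hnn ((UD.nu_image hd (by omega)).mp hcon)
    · rw [if_neg hb] at hv
      refine Or.inl ⟨⟨t, ht, hv⟩, ?_⟩
      rw [← hv]
      intro hcon
      exact hb (UD.nu_bidx ((UD.nu_image hd (by omega)).mp hcon))
  · rintro (⟨⟨t, ht, hv⟩, hni⟩ | ⟨⟨t, ht, hv⟩, hin⟩)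
    · have hnn : 2*t+1 ∉ ladderIdxSetD m a μ := by
        intro h
        exact hni (by rw [← hv]; exact (UD.nu_image hd (by omega)).mpr h)
      by_cases hb : UDBIdx μ (2*t+1)
      · obtain ⟨u, w, hS, hu1, hw0, huj, hjw, hmem⟩ := UD.bidx_stair hg hd hμ hb hnn
        rcases Nat.even_or_odd (2*t+1-u) with he | ho
        · rw [Nat.even_iff] at he
          obtain ⟨heq, hle⟩ := (UD.stair_pair hS).1 (2*t+1) huj hjw he
          have hwM : w ≤ 2*m+1 := hS.2.1
          have hbm : UDBIdx μ (2*(t+1)) := by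
            have e1 : 2*(t+1) = 2*t+1+1 := by ring
            rw [e1]
            exact (hmem (2*t+1+1) (by omega) (by omega)).1
          have hbo : UDBIdx μ (2*(t+1)+1) := (UD.bidx_pair hμ (t+1)).mp hbm
          refine ⟨t+1, by omega, ?_⟩
          rw [UD.c_odd, if_pos hbo]
          have ne1 := congrArg a (show 2*(t+1) = 2*t+1+1 by ring)
          omega
        · rw [Nat.odd_iff] at ho
          obtain ⟨heq, hge, h1⟩ := (UD.stair_pair hS).2 (2*t+1) huj hjw ho
          have ne1 : 2*t+1-1 = 2*t := by omega
          rw [ne1] at heq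
          refine ⟨t, ht, ?_⟩
          rw [UD.c_odd, if_pos hb]
          omega
      · exact ⟨t, ht, by rw [UD.c_odd, if_neg hb]; exact hv⟩
    · have hn : 2*t ∈ ladderIdxSetD m a μ := by
        rw [← hv] at hin
        exact (UD.nu_image hd (by omega)).mp hin
      have hb : UDBIdx μ (2*t+1) := (UD.bidx_pair hμ t).mp (UD.nu_bidx hn)
      exact ⟨t, ht, by rw [UD.c_odd, if_pos hb]; exact hv⟩

/-- The explicit twist has the same total sum as `a`. -/
lemma UD.c_sum {μ : Finset (ℕ × ℕ)} (hμ : μ ⊆ blocksD m a) :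
    ∑ j ∈ Finset.range (2*m+2), UDc a μ j = ∑ j ∈ Finset.range (2*m+2), a j := by
  have key : ∀ n, ∑ j ∈ Finset.range (2*n), UDc a μ j = ∑ j ∈ Finset.range (2*n), a j := by
    intro n
    induction n with
    | zero => simp
    | succ n ih =>
      have e1 : 2*(n+1) = (2*n+1)+1 := by ring
      rw [e1, Finset.sum_range_succ, Finset.sum_range_succ, Finset.sum_range_succ,
        Finset.sum_range_succ, ih]
      have h1 := UD.c_even (a := a) μ n
      have h2 := UD.c_odd (a := a) μ n
      by_cases hb : UDBIdx μ (2*n)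
      · rw [if_pos hb] at h1
        rw [if_pos ((UD.bidx_pair hμ n).mp hb)] at h2
        omega
      · rw [if_neg hb] at h1
        rw [if_neg (fun h => hb ((UD.bidx_pair hμ n).mpr h))] at h2
        omega
  have e1 : 2*m+2 = 2*(m+1) := by ring
  rw [e1]
  exact key (m+1)

/-- The explicit twist is a twist. -/
lemma UD.c_twist (hg : ∀ i, i + 2 ≤ 2*m+1 → a i + 2 ≤ a (i+2)) (hd : DistD m a)
    {μ : Finset (ℕ × ℕ)} (hμ : μ ⊆ blocksD m a) :
    IsTwistD m a (ladderIdxSetD m a μ) (UDc a μ) := by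
  refine ⟨?_, ?_, ?_, UD.row_even hg hd hμ, UD.row_odd hg hd hμ⟩
  · intro i hi
    have := (UD.nu_mem.mp hi).1
    omega
  · intro i hi j hj hji
    exact UD.nu_isol hd hi j hj hji
  · intro j hj
    have := UD.c_gap hg hd hμ j hj
    omega

lemma UD.map_range_eq {f g : ℕ → ℕ} {n : ℕ} (hf : ∀ s t, s < t → t < n → f s < f t)
    (hg' : ∀ s t, s < t → t < n → g s < g t)
    (h : Multiset.map f (Multiset.range n) = Multiset.map g (Multiset.range n)) :
    ∀ t, t < n → f t = g t := by
  have hper : (List.map f (List.range n)).Perm (List.map g (List.range n)) := by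
    rw [← Multiset.coe_eq_coe, ← Multiset.map_coe, ← Multiset.map_coe]
    exact h
  haveI : IsAntisymm ℕ (· < ·) := ⟨fun _ _ h1 h2 => absurd h2 (Nat.lt_asymm h1)⟩
  have hs1 : List.Pairwise (· < ·) (List.map f (List.range n)) := by
    rw [List.pairwise_iff_getElem]
    intro i j hi hj hij
    rw [List.length_map, List.length_range] at hi hj
    rw [List.getElem_map, List.getElem_map, List.getElem_range, List.getElem_range]
    exact hf i j hij hj
  have hs2 : List.Pairwise (· < ·) (List.map g (List.range n)) := by
    rw [List.pairwise_iff_getElem]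
    intro i j hi hj hij
    rw [List.length_map, List.length_range] at hi hj
    rw [List.getElem_map, List.getElem_map, List.getElem_range, List.getElem_range]
    exact hg' i j hij hj
  have heq := List.Perm.eq_of_pairwise (fun _ _ _ _ h1 h2 => absurd h2 (Nat.lt_asymm h1)) hs1 hs2 hper
  intro t ht
  have hlt : t < (List.map f (List.range n)).length := by
    rw [List.length_map, List.length_range]; exact ht
  have hlt2 : t < (List.map g (List.range n)).length := by
    rw [List.length_map, List.length_range]; exact ht
  have h1 : (List.map f (List.range n))[t]'hlt = (List.map g (List.range n))[t]'hlt2 := by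
    simp only [heq]
  simpa using h1

/-- Any two twists agree up to index `2m+1`. -/
lemma UD.twist_unique {ν : Finset ℕ} {c₁ c₂ : ℕ → ℕ}
    (h1 : IsTwistD m a ν c₁) (h2 : IsTwistD m a ν c₂) :
    ∀ j, j ≤ 2*m+1 → c₁ j = c₂ j := by
  have hre : rowED m c₁ = rowED m c₂ := by rw [h1.2.2.2.1, h2.2.2.2.1]
  have hro : rowOD m c₁ = rowOD m c₂ := by rw [h1.2.2.2.2, h2.2.2.2.2]
  have hfe : ∀ s t, s < t → t < m + 1 → c₁ (2*s) < c₁ (2*t) :=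
    fun s t hst ht => UD.chain_even h1.2.2.1 s t hst (by omega)
  have hge : ∀ s t, s < t → t < m + 1 → c₂ (2*s) < c₂ (2*t) :=
    fun s t hst ht => UD.chain_even h2.2.2.1 s t hst (by omega)
  have hfo : ∀ s t, s < t → t < m + 1 → c₁ (2*s+1) < c₁ (2*t+1) :=
    fun s t hst ht => UD.chain_odd h1.2.2.1 s t hst (by omega)
  have hgo : ∀ s t, s < t → t < m + 1 → c₂ (2*s+1) < c₂ (2*t+1) :=
    fun s t hst ht => UD.chain_odd h2.2.2.1 s t hst (by omega)
  have he := UD.map_range_eq hfe hge hre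
  have ho := UD.map_range_eq hfo hgo hro
  intro j hj
  obtain ⟨t, ht | ht⟩ := Nat.even_or_odd' j <;> subst ht
  · exact he t (by omega)
  · exact ho t (by omega)

end UDrows
section UDstar

variable {m : ℕ} {a : ℕ → ℕ}

lemma UD.star_congr {c₁ c₂ : ℕ → ℕ} (h : ∀ j, j ≤ 2*m+1 → c₁ j = c₂ j) :
    StarD m c₁ ↔ StarD m c₂ := by
  have key : ∀ i, i ≤ m → c₁ (2*i) = c₂ (2*i) ∧ c₁ (2*i+1) = c₂ (2*i+1) :=
    fun i hi => ⟨h _ (by omega), h _ (by omega)⟩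
  constructor
  · intro hs i hi hne hpr
    rw [← (key i hi).1, ← (key i hi).2]
    apply hs i hi
    · rw [(key i hi).1, (key i hi).2]
      exact hne
    · intro i' hi'
      rw [(key i' (by omega)).1, (key i' (by omega)).2]
      exact hpr i' hi'
  · intro hs i hi hne hpr
    rw [(key i hi).1, (key i hi).2]
    apply hs i hi
    · rw [← (key i hi).1, ← (key i hi).2]
      exact hne
    · intro i' hi'
      rw [← (key i' (by omega)).1, ← (key i' (by omega)).2]
      exact hpr i' hi'

lemma UD.star_c (hg : ∀ i, i + 2 ≤ 2*m+1 → a i + 2 ≤ a (i+2)) (hd : DistD m a)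
    {μ : Finset (ℕ × ℕ)} (hμ : μ ⊆ blocksD m a) {i0 : ℕ} (hi0 : i0 ≤ m)
    (hlt : a (2*i0) < a (2*i0+1))
    (hprev : ∀ i', i' < i0 → a (2*i') = a (2*i'+1)) :
    StarD m (UDc a μ) ↔ ¬ UDBIdx μ (2*i0) := by
  have hpairs : ∀ i, i < i0 → UDc a μ (2*i) = UDc a μ (2*i+1) := by
    intro i hi
    rw [UD.c_even, UD.c_odd]
    by_cases hb : UDBIdx μ (2*i)
    · rw [if_pos hb, if_pos ((UD.bidx_pair hμ i).mp hb)]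
      exact (hprev i hi).symm
    · rw [if_neg hb, if_neg (fun h => hb ((UD.bidx_pair hμ i).mpr h))]
      exact hprev i hi
  constructor
  · intro hs hb
    have h1 : UDc a μ (2*i0) = a (2*i0+1) := by rw [UD.c_even, if_pos hb]
    have h2 : UDc a μ (2*i0+1) = a (2*i0) := by
      rw [UD.c_odd, if_pos ((UD.bidx_pair hμ i0).mp hb)]
    have := hs i0 hi0 (by omega) hpairs
    omega
  · intro hb i hi hne hpr
    have hbo : ¬ UDBIdx μ (2*i0+1) := fun h => hb ((UD.bidx_pair hμ i0).mpr h)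
    have h1 : UDc a μ (2*i0) = a (2*i0) := by rw [UD.c_even, if_neg hb]
    have h2 : UDc a μ (2*i0+1) = a (2*i0+1) := by rw [UD.c_odd, if_neg hbo]
    rcases lt_trichotomy i i0 with h | h | h
    · exact absurd (hpairs i h) hne
    · subst h
      omega
    · have := hpr i0 h
      omega

end UDstar

/-- Let `a` be a distinguished type-D u-symbol with at least one block.  For
every subset `μ` of the set `B(a)` of blocks: the twist `a^μ` exists and is
well defined; it satisfies all defining conditions of a type-D u-symbol except
possibly (⋆); exactly one of `a^μ` and `a^{μ Δ B(a)}` satisfies (⋆); and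
consequently `T(a)` is a transversal in the power set of `B(a)` of the
two-element subgroup `{∅, B(a)}`. -/
theorem stmt19 (n m : ℕ) (hn : 1 ≤ n) (hm : 1 ≤ m) (a : ℕ → ℕ)
    (ha : IsUSymD n m a) (hdist : DistD m a)
    (hblock : ∃ k l, IsBlockD m a k l) :
    ∀ μ ⊆ blocksD m a,
      (∃ c', IsTwistD m a (ladderIdxSetD m a μ) c') ∧
      (∀ c₁ c₂, IsTwistD m a (ladderIdxSetD m a μ) c₁ →
        IsTwistD m a (ladderIdxSetD m a μ) c₂ → ∀ j ≤ 2 * m + 1, c₁ j = c₂ j) ∧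
      (∀ c', IsTwistD m a (ladderIdxSetD m a μ) c' →
        (∀ i, i + 2 ≤ 2 * m + 1 → c' i + 2 ≤ c' (i + 2)) ∧
        (∑ j ∈ Finset.range (2 * m + 2), c' j) = n + 2 * m ^ 2 + 2 * m) ∧
      (∀ c₁ c₂, IsTwistD m a (ladderIdxSetD m a μ) c₁ →
        IsTwistD m a (ladderIdxSetD m a (symmDiff μ (blocksD m a))) c₂ →
        (StarD m c₁ ↔ ¬ StarD m c₂)) ∧
      Xor' (TwistValidD n m a μ) (TwistValidD n m a (symmDiff μ (blocksD m a))) := by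
  obtain ⟨hgap, hsum, hastar⟩ := ha
  have hex : ∃ i, i ≤ m ∧ a (2*i) ≠ a (2*i+1) := by
    obtain ⟨k, l, hb⟩ := hblock
    obtain ⟨hE, hO, hkl, hlM, -, -, hfirst, -⟩ := UD.block_struct hb
    rw [Nat.even_iff] at hE
    rw [Nat.odd_iff] at hO
    refine ⟨k/2, by omega, ?_⟩
    have e1 := congrArg a (show 2*(k/2) = k by omega)
    have e2 := congrArg a (show 2*(k/2)+1 = k+1 by omega)
    omega
  set i0 := Nat.find hex with hi0def
  have hspec := Nat.find_spec hex
  have hi0m : i0 ≤ m := hspec.1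
  have hne0 : a (2*i0) ≠ a (2*i0+1) := hspec.2
  have hlt0 : a (2*i0) < a (2*i0+1) := by
    have := hdist (2*i0) (by omega)
    omega
  have hprev : ∀ i', i' < i0 → a (2*i') = a (2*i'+1) := by
    intro i' hi'
    have hmin := Nat.find_min hex hi'
    by_contra hc
    exact hmin ⟨by omega, hc⟩
  obtain ⟨L, hβ, hLM⟩ := UD.block_exists_at hgap hdist hi0m hlt0 hprev
  have h2i0L : 2*i0 ≤ L := (UD.block_struct hβ).2.2.1
  have hβB : ((2*i0, L) : ℕ × ℕ) ∈ blocksD m a := by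
    unfold blocksD
    rw [Finset.mem_filter, Finset.mem_product]
    exact ⟨⟨Finset.mem_range.mpr (by omega), Finset.mem_range.mpr (by omega)⟩, hβ⟩
  have hbi : ∀ σ : Finset (ℕ × ℕ), σ ⊆ blocksD m a →
      (UDBIdx σ (2*i0) ↔ ((2*i0, L) : ℕ × ℕ) ∈ σ) := by
    intro σ hσ
    constructor
    · rintro ⟨p, hp, h1, h2⟩
      obtain ⟨he1, he2⟩ :=
        UD.block_unique hgap hdist (UD.mem_block hσ hp) hβ h1 h2 (le_refl _) h2i0L
      have hpe : p = ((2*i0, L) : ℕ × ℕ) := by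
        rcases p with ⟨p1, p2⟩
        simp only at he1 he2
        rw [he1, he2]
      rwa [hpe] at hp
    · intro h
      exact ⟨((2*i0, L) : ℕ × ℕ), h, le_refl _, h2i0L⟩
  intro μ hμ
  set μ' := symmDiff μ (blocksD m a) with hμ'def
  have hμ' : μ' ⊆ blocksD m a := by
    intro p hp
    rcases Finset.mem_symmDiff.mp hp with ⟨h1, h2⟩ | ⟨h1, h2⟩
    · exact hμ h1
    · exact h1
  have hmem' : ((2*i0, L) : ℕ × ℕ) ∈ μ' ↔ ((2*i0, L) : ℕ × ℕ) ∉ μ := by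
    rw [hμ'def, Finset.mem_symmDiff]
    constructor
    · rintro (⟨h1, h2⟩ | ⟨h1, h2⟩)
      · exact absurd hβB h2
      · exact h2
    · intro h
      exact Or.inr ⟨hβB, h⟩
  have hdix : UDBIdx μ' (2*i0) ↔ ¬ UDBIdx μ (2*i0) := by
    rw [hbi μ hμ, hbi μ' hμ', hmem']
  have htw := UD.c_twist hgap hdist hμ
  have htw' := UD.c_twist hgap hdist hμ'
  have hstar1 := UD.star_c hgap hdist hμ hi0m hlt0 hprev
  have hstar2 := UD.star_c hgap hdist hμ' hi0m hlt0 hprev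
  have hgapc := UD.c_gap hgap hdist hμ
  have hvalid : ∀ σ : Finset (ℕ × ℕ), σ ⊆ blocksD m a →
      (TwistValidD n m a σ ↔ StarD m (UDc a σ)) := by
    intro σ hσ
    constructor
    · rintro ⟨c', hct, hcu⟩
      have hag := UD.twist_unique hct (UD.c_twist hgap hdist hσ)
      exact (UD.star_congr hag).mp hcu.2.2
    · intro hst
      exact ⟨UDc a σ, UD.c_twist hgap hdist hσ,
        UD.c_gap hgap hdist hσ, by rw [UD.c_sum hσ]; exact hsum, hst⟩
  refine ⟨⟨UDc a μ, htw⟩, ?_, ?_, ?_, ?_⟩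
  · intro c₁ c₂ h1 h2 j hj
    exact UD.twist_unique h1 h2 j hj
  · intro c' hc'
    have hag := UD.twist_unique hc' htw
    constructor
    · intro i hi
      rw [hag i (by omega), hag (i+2) (by omega)]
      exact hgapc i hi
    · rw [Finset.sum_congr rfl (fun j hj => hag j (by
        have := Finset.mem_range.mp hj
        omega))]
      rw [UD.c_sum hμ]
      exact hsum
  · intro c₁ c₂ h1 h2
    have hag1 := UD.twist_unique h1 htw
    have hag2 := UD.twist_unique h2 htw'
    rw [UD.star_congr hag1, hstar1, UD.star_congr hag2, hstar2, hdix]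
    tauto
  · have hA : TwistValidD n m a μ ↔ StarD m (UDc a μ) := hvalid μ hμ
    have hB : TwistValidD n m a μ' ↔ ¬ StarD m (UDc a μ) := by
      rw [hvalid μ' hμ', hstar2, hdix, ← hstar1]
    unfold Xor'
    by_cases hS : StarD m (UDc a μ)
    · exact Or.inl ⟨hA.mpr hS, fun hb => (hB.mp hb) hS⟩
    · exact Or.inr ⟨hB.mpr hS, fun ha' => hS (hA.mp ha')⟩
end
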